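/- arXiv:2601.06492 — 2 statements merged into one kernel-verified Lean document; each statement's English description precedes it below -/
import Mathlib

section
/- Let α ∈ (1/2, 1) and define the Petz–Augustin information I_α^A(p) := inf over positive definite density matrices Q ∈ ℂ^{d×d} of Σ_{j=1}^n p[j] D_α(W(j)‖Q) for p ∈ Δ_n. Let p_1 ∈ Δ_n be the uniform distribution p_1[j] = 1/n, and for each t = 1, …, T assume there exists a positive definite density matrix Q_t attaining the infimum defining I_α^A(p_t), and define p_{t+1}[j] := p_t[j]·exp(D_α(W(j)‖Q_t)) / (Σ_{k=1}^n p_t[k]·exp(D_α(W(k)‖Q_t))). Then for every p ∈ Δ_n, I_α^A(p) − I_α^A(p_{T+1}) ≤ log(n)/T. -/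
open Matrix
open scoped ComplexOrder

/-- Matrix power of a Hermitian matrix, defined by applying `t ↦ t ^ r` (real `rpow`)
to the eigenvalues in a spectral decomposition. Returns `0` on non-Hermitian input. -/
noncomputable def matRpow {d : ℕ} (A : Matrix (Fin d) (Fin d) ℂ) (r : ℝ) :
    Matrix (Fin d) (Fin d) ℂ :=
  if hA : A.IsHermitian then
    (hA.eigenvectorUnitary : Matrix (Fin d) (Fin d) ℂ) *
      Matrix.diagonal (fun i => ((hA.eigenvalues i ^ r : ℝ) : ℂ)) *
      (star hA.eigenvectorUnitary : Matrix (Fin d) (Fin d) ℂ)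
  else 0

/-- Petz–Rényi divergence `D_α(A‖Q) = (1/(α-1)) log Tr[A^α Q^{1-α}]`. -/
noncomputable def petzRenyiDiv {d : ℕ} (α : ℝ) (A Q : Matrix (Fin d) (Fin d) ℂ) : ℝ :=
  (1 / (α - 1)) * Real.log ((matRpow A α * matRpow Q (1 - α)).trace).re

/-- The Petz–Augustin information
`I_α^A(p) = inf_{Q positive definite density matrix} ∑ⱼ p[j] D_α(W(j)‖Q)`. -/
noncomputable def augustinInfo {n d : ℕ} (α : ℝ) (W : Fin n → Matrix (Fin d) (Fin d) ℂ)
    (p : Fin n → ℝ) : ℝ :=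
  ⨅ Q : {Q : Matrix (Fin d) (Fin d) ℂ // Q.PosDef ∧ Q.trace = 1},
    ∑ j, p j * petzRenyiDiv α (W j) (Q : Matrix (Fin d) (Fin d) ℂ)

namespace EMD

/-! ### Scalar lemmas -/

lemma gibbs_ineq {n : ℕ} (hn : 0 < n) (r y : Fin n → ℝ) (hr : ∀ j, 0 < r j)
    (hr1 : ∑ j, r j = 1) (hy : ∀ j, 0 < y j) :
    ∑ j, r j * Real.log (y j / r j) ≤ Real.log (∑ j, y j) := by
  have : Nonempty (Fin n) := ⟨⟨0, hn⟩⟩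
  have hS : 0 < ∑ j, y j := Finset.sum_pos (fun j _ => hy j) Finset.univ_nonempty
  have key : ∀ j, r j * Real.log (y j / r j) - r j * Real.log (∑ k, y k) ≤ y j / (∑ k, y k) - r j := by
    intro j
    have h1 : 0 < y j / (r j * ∑ k, y k) := div_pos (hy j) (mul_pos (hr j) hS)
    have h2 : Real.log (y j / (r j * ∑ k, y k)) ≤ y j / (r j * ∑ k, y k) - 1 :=
      Real.log_le_sub_one_of_pos h1
    have h3 : Real.log (y j / (r j * ∑ k, y k)) = Real.log (y j / r j) - Real.log (∑ k, y k) := by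
      rw [Real.log_div (hy j).ne' (mul_pos (hr j) hS).ne', Real.log_mul (hr j).ne' hS.ne',
        Real.log_div (hy j).ne' (hr j).ne']
      ring
    have h4 := mul_le_mul_of_nonneg_left h2 (hr j).le
    rw [h3] at h4
    have h5 : r j * (y j / (r j * ∑ k, y k) - 1) = y j / (∑ k, y k) - r j := by
      have hd : y j / (r j * ∑ k, y k) = (y j / (∑ k, y k)) / r j := by
        rw [div_div, mul_comm]
      rw [hd, mul_sub, mul_div_cancel₀ _ (hr j).ne', mul_one]
    nlinarith [h4, h5]
  have h6 := Finset.sum_le_sum (fun j (_ : j ∈ Finset.univ) => key j)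
  rw [Finset.sum_sub_distrib, ← Finset.sum_mul, hr1, one_mul, Finset.sum_sub_distrib,
    ← Finset.sum_div, div_self hS.ne', hr1] at h6
  linarith

lemma log_one_add_ge (x : ℝ) (hx : -(1/2 : ℝ) ≤ x) : x - 2 * x ^ 2 ≤ Real.log (1 + x) := by
  have h1x : (0:ℝ) < 1 + x := by nlinarith
  have hq : (0:ℝ) < 1 - x + 2 * x ^ 2 := by nlinarith [sq_nonneg x, sq_nonneg (x-1)]
  have h2 : 1 - x + 2*x^2 ≤ Real.exp (-(x - 2*x^2)) := by
    have := Real.add_one_le_exp (-(x - 2*x^2))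
    linarith
  have h3 : Real.exp (x - 2*x^2) ≤ (1 - x + 2*x^2)⁻¹ := by
    have h := inv_anti₀ hq h2
    rwa [← Real.exp_neg, neg_neg] at h
  have h4 : (1 - x + 2*x^2)⁻¹ ≤ 1 + x := by
    rw [inv_le_iff_one_le_mul₀ hq]
    nlinarith [sq_nonneg x]
  have h5 : Real.exp (x - 2*x^2) ≤ 1 + x := h3.trans h4
  calc x - 2*x^2 = Real.log (Real.exp (x - 2*x^2)) := (Real.log_exp _).symm
    _ ≤ Real.log (1 + x) := Real.log_le_log (Real.exp_pos _) h5

lemma slope_lemma {n : ℕ} (hn : 0 < n) (p a : Fin n → ℝ) (hp : ∀ j, 0 ≤ p j)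
    (ha : ∀ j, -1 < a j)
    (h : ∀ s : ℝ, s ∈ Set.Ioc (0:ℝ) 1 → ∑ j, p j * Real.log (1 + s * a j) ≤ 0) :
    ∑ j, p j * a j ≤ 0 := by
  have : Nonempty (Fin n) := ⟨⟨0, hn⟩⟩
  by_contra hc
  push_neg at hc
  set ε := ∑ j, p j * a j with hε
  set A := ∑ j, p j * (a j)^2 with hA
  have hA0 : 0 ≤ A := Finset.sum_nonneg fun j _ => mul_nonneg (hp j) (sq_nonneg _)
  set M := (Finset.univ.sup' Finset.univ_nonempty fun j => |a j|) with hM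
  have hMj : ∀ j, |a j| ≤ M := fun j => Finset.le_sup' (fun j => |a j|) (Finset.mem_univ j)
  have hM0 : 0 ≤ M := le_trans (abs_nonneg (a ⟨0, hn⟩)) (hMj ⟨0, hn⟩)
  set s := min 1 (min (1/(2*M+1)) (ε/(2*A+1))) with hs
  have hs0 : 0 < s := by
    apply lt_min (by norm_num)
    exact lt_min (by positivity) (div_pos hc (by linarith))
  have hs1 : s ≤ 1 := min_le_left _ _
  have hsM : ∀ j, -(1/2:ℝ) ≤ s * a j := by
    intro j
    have h1 : |a j| ≤ M := hMj j
    have h2 : s ≤ 1/(2*M+1) := le_trans (min_le_right _ _) (min_le_left _ _)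
    have h3 : |s * a j| ≤ (1/(2*M+1)) * M := by
      rw [abs_mul, abs_of_pos hs0]
      exact mul_le_mul h2 h1 (abs_nonneg _) (by positivity)
    have h4 : (1/(2*M+1)) * M ≤ 1/2 := by
      rw [div_mul_eq_mul_div, div_le_div_iff₀ (by linarith) (by norm_num)]
      linarith
    have := (abs_le.mp (h3.trans h4)).1
    linarith
  have hlog : ∀ j, p j * (s * a j - 2 * (s * a j)^2) ≤ p j * Real.log (1 + s * a j) :=
    fun j => mul_le_mul_of_nonneg_left (log_one_add_ge _ (hsM j)) (hp j)
  have h7 := Finset.sum_le_sum (fun j (_ : j ∈ Finset.univ) => hlog j)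
  have h8 := (h7.trans (h s ⟨hs0, hs1⟩))
  have h9 : ∑ j, p j * (s * a j - 2 * (s * a j)^2) = s * ε - 2 * s^2 * A := by
    rw [hε, hA, Finset.mul_sum, Finset.mul_sum, ← Finset.sum_sub_distrib]
    congr 1; ext j; ring
  rw [h9] at h8
  have h10 : ε ≤ 2 * s * A := by nlinarith [h8, hs0]
  have hsA : s ≤ ε/(2*A+1) := le_trans (min_le_right _ _) (min_le_right _ _)
  have h11 : 2 * s * A ≤ 2 * (ε/(2*A+1)) * A := by nlinarith
  have hcancel : ε/(2*A+1) * (2*A+1) = ε := div_mul_cancel₀ _ (by linarith)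
  have hdivpos : 0 ≤ ε/(2*A+1) := le_of_lt (div_pos hc (by linarith))
  nlinarith [hcancel, hdivpos]

/-! ### Spectral toolkit -/

variable {d : ℕ}

/-- conjugation of a real diagonal by a unitary -/
noncomputable def cdg (V : Matrix.unitaryGroup (Fin d) ℂ) (g : Fin d → ℝ) :
    Matrix (Fin d) (Fin d) ℂ :=
  (V : Matrix (Fin d) (Fin d) ℂ) * Matrix.diagonal (fun k => (g k : ℂ)) *
    star (V : Matrix (Fin d) (Fin d) ℂ)

lemma matRpow_eq {A : Matrix (Fin d) (Fin d) ℂ} (hA : A.IsHermitian) (r : ℝ) :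
    matRpow A r = cdg hA.eigenvectorUnitary (fun i => hA.eigenvalues i ^ r) := by
  rw [matRpow, dif_pos hA]; rfl

lemma normSq_row_sum {N : Matrix (Fin d) (Fin d) ℂ} (hN : N * star N = 1) (i : Fin d) :
    ∑ k, Complex.normSq (N i k) = 1 := by
  have h := congrFun (congrFun hN i) i
  rw [Matrix.mul_apply] at h
  simp only [Matrix.one_apply_eq] at h
  have h2 : ∑ k, N i k * (star N) k i = (↑(∑ k, Complex.normSq (N i k)) : ℂ) := by
    push_cast
    refine Finset.sum_congr rfl fun k _ => ?_
    rw [Matrix.star_apply, RCLike.star_def, Complex.mul_conj]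
  rw [h2] at h
  exact_mod_cast h

lemma normSq_col_sum {N : Matrix (Fin d) (Fin d) ℂ} (hN : N * star N = 1) (k : Fin d) :
    ∑ i, Complex.normSq (N i k) = 1 := by
  have hN' : star N * N = 1 := mul_eq_one_comm.mp hN
  have h := congrFun (congrFun hN' k) k
  rw [Matrix.mul_apply] at h
  simp only [Matrix.one_apply_eq] at h
  have h2 : ∑ i, (star N) k i * N i k = (↑(∑ i, Complex.normSq (N i k)) : ℂ) := by
    push_cast
    refine Finset.sum_congr rfl fun i _ => ?_
    rw [Matrix.star_apply, RCLike.star_def, mul_comm, Complex.mul_conj]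
  rw [h2] at h
  exact_mod_cast h

lemma star_mul_unitary (U V : Matrix.unitaryGroup (Fin d) ℂ) :
    (star (U : Matrix (Fin d) (Fin d) ℂ) * V) *
      star (star (U : Matrix (Fin d) (Fin d) ℂ) * V) = 1 := by
  rw [StarMul.star_mul, star_star, Matrix.mul_assoc,
    ← Matrix.mul_assoc (V : Matrix (Fin d) (Fin d) ℂ),
    Unitary.mul_star_self_of_mem V.2, Matrix.one_mul, Unitary.star_mul_self_of_mem U.2]

/-- overlap (doubly stochastic) matrix of two unitaries -/
noncomputable def ovl (U V : Matrix.unitaryGroup (Fin d) ℂ) (i k : Fin d) : ℝ :=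
  Complex.normSq ((star (U : Matrix (Fin d) (Fin d) ℂ) * V) i k)

lemma ovl_nonneg (U V : Matrix.unitaryGroup (Fin d) ℂ) (i k : Fin d) : 0 ≤ ovl U V i k :=
  Complex.normSq_nonneg _

lemma ovl_row_sum (U V : Matrix.unitaryGroup (Fin d) ℂ) (i : Fin d) :
    ∑ k, ovl U V i k = 1 := normSq_row_sum (star_mul_unitary U V) i

lemma ovl_col_sum (U V : Matrix.unitaryGroup (Fin d) ℂ) (k : Fin d) :
    ∑ i, ovl U V i k = 1 := normSq_col_sum (star_mul_unitary U V) k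

/-- the central trace formula -/
lemma trace_cdg_mul_cdg (U V : Matrix.unitaryGroup (Fin d) ℂ) (f g : Fin d → ℝ) :
    ((cdg U f * cdg V g).trace) = ((∑ i, ∑ k, f i * g k * ovl U V i k : ℝ) : ℂ) := by
  set Um := (U : Matrix (Fin d) (Fin d) ℂ)
  set Vm := (V : Matrix (Fin d) (Fin d) ℂ)
  set Df := Matrix.diagonal (fun i => (f i : ℂ)) with hDf
  set Dg := Matrix.diagonal (fun k => (g k : ℂ)) with hDg
  have step1 : cdg U f * cdg V g = Um * (Df * (star Um * (Vm * (Dg * star Vm)))) := by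
    simp only [cdg, Matrix.mul_assoc]
    rfl
  have step2 : (cdg U f * cdg V g).trace
      = ((Df * (star Um * Vm)) * (Dg * (star Vm * Um))).trace := by
    rw [step1, Matrix.trace_mul_comm Um]
    congr 1
    simp only [Matrix.mul_assoc]
  rw [step2]
  have hsN : star Vm * Um = star (star Um * Vm) := by
    rw [StarMul.star_mul, star_star]
  rw [hsN]
  set N := star Um * Vm with hNdef
  rw [Matrix.trace]
  push_cast
  refine Finset.sum_congr rfl fun i _ => ?_
  rw [Matrix.diag_apply, Matrix.mul_apply]
  refine Finset.sum_congr rfl fun k _ => ?_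
  rw [hDf, hDg, Matrix.diagonal_mul, Matrix.diagonal_mul, Matrix.star_apply, RCLike.star_def]
  have e : (f i : ℂ) * N i k * ((g k : ℂ) * (starRingEnd ℂ) (N i k))
      = (f i : ℂ) * (g k : ℂ) * (N i k * (starRingEnd ℂ) (N i k)) := by ring
  rw [e, Complex.mul_conj]
  push_cast
  rfl

lemma traceRe_cdg_mul_cdg (U V : Matrix.unitaryGroup (Fin d) ℂ) (f g : Fin d → ℝ) :
    ((cdg U f * cdg V g).trace).re = ∑ i, ∑ k, f i * g k * ovl U V i k := by
  rw [trace_cdg_mul_cdg, Complex.ofReal_re]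

lemma sum_eigenvalues_eq_trace {A : Matrix (Fin d) (Fin d) ℂ} (hA : A.IsHermitian) :
    ((∑ i, hA.eigenvalues i : ℝ) : ℂ) = A.trace := by
  conv_rhs => rw [hA.spectral_theorem]
  rw [Unitary.conjStarAlgAut_apply, Matrix.trace_mul_comm, ← Matrix.mul_assoc,
    Unitary.star_mul_self_of_mem hA.eigenvectorUnitary.2, Matrix.one_mul, Matrix.trace_diagonal]
  push_cast
  rfl

/-- column of a unitary -/
def colv (V : Matrix.unitaryGroup (Fin d) ℂ) (i : Fin d) : Fin d → ℂ :=
  fun a => (V : Matrix (Fin d) (Fin d) ℂ) a i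

/-- real part of quadratic form -/
noncomputable def qRe (Y : Matrix (Fin d) (Fin d) ℂ) (v : Fin d → ℂ) : ℝ :=
  (star v ⬝ᵥ (Y *ᵥ v)).re

lemma cdg_mul_cdg (V : Matrix.unitaryGroup (Fin d) ℂ) (g h : Fin d → ℝ) :
    cdg V g * cdg V h = cdg V (fun k => g k * h k) := by
  rw [cdg, cdg, cdg]
  have e1 : (V : Matrix (Fin d) (Fin d) ℂ) * Matrix.diagonal (fun k => (g k : ℂ)) *
      star (V : Matrix (Fin d) (Fin d) ℂ) * ((V : Matrix (Fin d) (Fin d) ℂ) *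
      Matrix.diagonal (fun k => (h k : ℂ)) * star (V : Matrix (Fin d) (Fin d) ℂ))
      = (V : Matrix (Fin d) (Fin d) ℂ) * (Matrix.diagonal (fun k => (g k : ℂ)) *
        ((star (V : Matrix (Fin d) (Fin d) ℂ) * (V : Matrix (Fin d) (Fin d) ℂ)) *
        (Matrix.diagonal (fun k => (h k : ℂ)) * star (V : Matrix (Fin d) (Fin d) ℂ)))) := by
    simp only [Matrix.mul_assoc]
  rw [e1, Unitary.star_mul_self_of_mem V.2, Matrix.one_mul,
    ← Matrix.mul_assoc (Matrix.diagonal fun k => ((g k : ℝ) : ℂ))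
      (Matrix.diagonal fun k => ((h k : ℝ) : ℂ)) (star (V : Matrix (Fin d) (Fin d) ℂ)),
    Matrix.diagonal_mul_diagonal, ← Matrix.mul_assoc]
  push_cast
  rfl

lemma trace_cdg_mul (V : Matrix.unitaryGroup (Fin d) ℂ) (g : Fin d → ℝ)
    (Y : Matrix (Fin d) (Fin d) ℂ) :
    ((cdg V g * Y).trace) = ∑ i, (g i : ℂ) * ((star (V : Matrix (Fin d) (Fin d) ℂ) *
      (Y * (V : Matrix (Fin d) (Fin d) ℂ))) i i) := by
  have step1 : cdg V g * Y = (V : Matrix (Fin d) (Fin d) ℂ) *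
      ((Matrix.diagonal (fun k => (g k : ℂ))) * (star (V : Matrix (Fin d) (Fin d) ℂ) * Y)) := by
    simp only [cdg, Matrix.mul_assoc]
  rw [step1, Matrix.trace_mul_comm]
  have step2 : Matrix.diagonal (fun k => (g k : ℂ)) * (star (V : Matrix (Fin d) (Fin d) ℂ) * Y) *
      (V : Matrix (Fin d) (Fin d) ℂ) = Matrix.diagonal (fun k => (g k : ℂ)) *
      (star (V : Matrix (Fin d) (Fin d) ℂ) * (Y * (V : Matrix (Fin d) (Fin d) ℂ))) := by
    simp only [Matrix.mul_assoc]
  rw [step2, Matrix.trace]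
  refine Finset.sum_congr rfl fun i _ => ?_
  rw [Matrix.diag_apply, Matrix.diagonal_mul]

lemma inner_col_eq (V : Matrix.unitaryGroup (Fin d) ℂ) (Y : Matrix (Fin d) (Fin d) ℂ) (i : Fin d) :
    (star (V : Matrix (Fin d) (Fin d) ℂ) * (Y * (V : Matrix (Fin d) (Fin d) ℂ))) i i
      = star (colv V i) ⬝ᵥ (Y *ᵥ colv V i) := by
  rw [Matrix.mul_apply, dotProduct]
  refine Finset.sum_congr rfl fun a _ => ?_
  rw [Matrix.star_apply, Matrix.mul_apply, Matrix.mulVec, dotProduct]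
  simp only [colv, Pi.star_apply]

lemma traceRe_cdg_mul (V : Matrix.unitaryGroup (Fin d) ℂ) (g : Fin d → ℝ)
    (Y : Matrix (Fin d) (Fin d) ℂ) :
    ((cdg V g * Y).trace).re = ∑ i, g i * qRe Y (colv V i) := by
  rw [trace_cdg_mul, Complex.re_sum]
  refine Finset.sum_congr rfl fun i _ => ?_
  rw [inner_col_eq, qRe, Complex.mul_re, Complex.ofReal_re, Complex.ofReal_im]
  ring

lemma smul_one_diag (s : ℝ) : ((s:ℂ) • (1 : Matrix (Fin d) (Fin d) ℂ))
    = Matrix.diagonal (fun _ => (s:ℂ)) := by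
  ext i j
  by_cases h : i = j <;> simp [h, Matrix.one_apply, Matrix.diagonal]

lemma add_smul_one_eq_cdg {X : Matrix (Fin d) (Fin d) ℂ} (hX : X.IsHermitian) (s : ℝ) :
    X + (s:ℂ) • 1 = cdg hX.eigenvectorUnitary (fun k => hX.eigenvalues k + s) := by
  conv_lhs => rw [hX.spectral_theorem]
  rw [cdg]
  have e : Matrix.diagonal (fun k => ((hX.eigenvalues k + s : ℝ) : ℂ))
      = Matrix.diagonal (RCLike.ofReal ∘ hX.eigenvalues) + (s:ℂ) • 1 := by
    rw [smul_one_diag, Matrix.diagonal_add]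
    push_cast
    rfl
  rw [e, Matrix.mul_add, Matrix.add_mul]
  congr 1
  rw [Matrix.mul_smul, Matrix.smul_mul, Matrix.mul_one,
    Unitary.mul_star_self_of_mem hX.eigenvectorUnitary.2]

lemma resolvent_eq {X : Matrix (Fin d) (Fin d) ℂ} (hX : X.PosDef) {s : ℝ} (hs : 0 < s) :
    (X + (s:ℂ) • 1)⁻¹ = cdg hX.1.eigenvectorUnitary (fun k => (hX.1.eigenvalues k + s)⁻¹) := by
  apply Matrix.inv_eq_left_inv
  rw [add_smul_one_eq_cdg hX.1 s, cdg_mul_cdg]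
  have e : (fun k => (hX.1.eigenvalues k + s)⁻¹ * (hX.1.eigenvalues k + s)) = fun _ => (1:ℝ) := by
    funext k
    exact inv_mul_cancel₀ (by have := hX.eigenvalues_pos k; linarith)
  rw [e, cdg]
  simp only [Complex.ofReal_one, Matrix.diagonal_one, mul_one]
  exact Unitary.mul_star_self_of_mem hX.1.eigenvectorUnitary.2

lemma posDef_ofReal_smul {A : Matrix (Fin d) (Fin d) ℂ} {c : ℝ} (hc : 0 < c) (hA : A.PosDef) :
    (((c:ℝ):ℂ) • A).PosDef := by
  refine Matrix.PosDef.of_dotProduct_mulVec_pos ?_ ?_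
  · rw [Matrix.IsHermitian, Matrix.conjTranspose_smul, hA.1.eq, Complex.star_def,
      Complex.conj_ofReal]
  · intro x hx
    rw [Matrix.smul_mulVec, dotProduct_smul]
    have h1 : 0 < ((c:ℝ):ℂ) := by
      rw [Complex.zero_lt_real]
      exact hc
    have h2 := hA.dotProduct_mulVec_pos hx
    calc (0:ℂ) = ((c:ℝ):ℂ) * 0 := by ring
      _ < ((c:ℝ):ℂ) * (star x ⬝ᵥ A.mulVec x) := by
          exact mul_lt_mul_of_pos_left h2 h1

lemma posSemidef_ofReal_smul {A : Matrix (Fin d) (Fin d) ℂ} {c : ℝ} (hc : 0 ≤ c)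
    (hA : A.PosSemidef) : (((c:ℝ):ℂ) • A).PosSemidef := by
  refine Matrix.PosSemidef.of_dotProduct_mulVec_nonneg ?_ ?_
  · rw [Matrix.IsHermitian, Matrix.conjTranspose_smul, hA.1.eq, Complex.star_def,
      Complex.conj_ofReal]
  · intro x
    rw [Matrix.smul_mulVec, dotProduct_smul]
    have h1 : 0 ≤ ((c:ℝ):ℂ) := by rw [Complex.zero_le_real]; exact hc
    exact smul_nonneg h1 (hA.dotProduct_mulVec_nonneg x)

lemma posDef_combo {A B : Matrix (Fin d) (Fin d) ℂ} (hA : A.PosDef) (hB : B.PosDef)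
    {s : ℝ} (h0 : 0 ≤ s) (h1 : s ≤ 1) :
    ((((1-s:ℝ)):ℂ) • A + ((s:ℝ):ℂ) • B).PosDef := by
  rcases eq_or_lt_of_le h1 with h | h
  · subst h
    simp only [sub_self, Complex.ofReal_zero, zero_smul, Complex.ofReal_one, one_smul, zero_add]
    exact hB
  · exact (posDef_ofReal_smul (by linarith) hA).add_posSemidef
      (posSemidef_ofReal_smul h0 hB.posSemidef)

/-! ### Convexity of the inverse quadratic form -/

lemma star_dot_comm (v w : Fin d → ℂ) : star w ⬝ᵥ v = (starRingEnd ℂ) (star v ⬝ᵥ w) := by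
  rw [dotProduct, dotProduct, map_sum]
  refine Finset.sum_congr rfl fun a _ => ?_
  simp only [Pi.star_apply, RCLike.star_def, _root_.map_mul, Complex.conj_conj]
  ring

lemma qf_nonneg {P : Matrix (Fin d) (Fin d) ℂ} (hP : P.PosSemidef) (v : Fin d → ℂ) :
    0 ≤ qRe P v := by
  have := hP.dotProduct_mulVec_nonneg v
  rw [Complex.le_def] at this
  simpa [qRe] using this.1

lemma inv_qf_lower {P : Matrix (Fin d) (Fin d) ℂ} (hP : P.PosDef) (v w : Fin d → ℂ) :
    2 * (star v ⬝ᵥ w).re - qRe P w ≤ qRe P⁻¹ v := by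
  have hdet : IsUnit P.det := hP.det_pos.ne'.isUnit
  have hPP : P * P⁻¹ = 1 := Matrix.mul_nonsing_inv _ hdet
  have hPPl : P⁻¹ * P = 1 := Matrix.nonsing_inv_mul _ hdet
  have hPinvH : (P⁻¹).IsHermitian := hP.1.inv
  set z := P⁻¹ *ᵥ v with hz
  have hPz : P *ᵥ z = v := by
    rw [hz, Matrix.mulVec_mulVec, hPP, Matrix.one_mulVec]
  have key : ∀ y : Fin d → ℂ, star z ⬝ᵥ (P *ᵥ y) = star v ⬝ᵥ (P⁻¹ *ᵥ (P *ᵥ y)) := by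
    intro y
    rw [hz, Matrix.star_mulVec, ← Matrix.dotProduct_mulVec, hPinvH.eq]
  have hzPz : star z ⬝ᵥ (P *ᵥ z) = star v ⬝ᵥ (P⁻¹ *ᵥ v) := by
    rw [key, hPz]
  have hzPw : star z ⬝ᵥ (P *ᵥ w) = star v ⬝ᵥ w := by
    rw [key, Matrix.mulVec_mulVec, hPPl, Matrix.one_mulVec]
  have hwPz : star w ⬝ᵥ (P *ᵥ z) = (starRingEnd ℂ) (star v ⬝ᵥ w) := by
    rw [hPz, star_dot_comm]
  have expand : star (w - z) ⬝ᵥ (P *ᵥ (w - z))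
      = star w ⬝ᵥ (P *ᵥ w) - (starRingEnd ℂ) (star v ⬝ᵥ w) - star v ⬝ᵥ w
        + star v ⬝ᵥ (P⁻¹ *ᵥ v) := by
    rw [Matrix.mulVec_sub, star_sub, sub_dotProduct, dotProduct_sub,
      dotProduct_sub, hzPz, hzPw, hwPz]
    ring
  have hpos : 0 ≤ qRe P (w - z) := qf_nonneg hP.posSemidef _
  rw [qRe, expand] at hpos
  simp only [Complex.sub_re, Complex.add_re, Complex.conj_re] at hpos
  rw [qRe, qRe]
  linarith

lemma qRe_smul_add (A B : Matrix (Fin d) (Fin d) ℂ) (a b : ℝ) (w : Fin d → ℂ) :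
    qRe (((a:ℝ):ℂ) • A + ((b:ℝ):ℂ) • B) w = a * qRe A w + b * qRe B w := by
  rw [qRe, Matrix.add_mulVec, dotProduct_add, Matrix.smul_mulVec,
    Matrix.smul_mulVec, dotProduct_smul, dotProduct_smul]
  simp only [Complex.add_re, smul_eq_mul, Complex.mul_re, Complex.ofReal_re, Complex.ofReal_im]
  rw [qRe, qRe]
  ring

lemma qRe_inv_combo {A B : Matrix (Fin d) (Fin d) ℂ} (hA : A.PosDef) (hB : B.PosDef)
    {s : ℝ} (h0 : 0 ≤ s) (h1 : s ≤ 1) (v : Fin d → ℂ) :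
    qRe ((((1-s:ℝ)):ℂ) • A + ((s:ℝ):ℂ) • B)⁻¹ v
      ≤ (1-s) * qRe A⁻¹ v + s * qRe B⁻¹ v := by
  set M := (((1-s:ℝ)):ℂ) • A + ((s:ℝ):ℂ) • B with hM
  have hMpd : M.PosDef := posDef_combo hA hB h0 h1
  have hdet : IsUnit M.det := hMpd.det_pos.ne'.isUnit
  set w := M⁻¹ *ᵥ v with hw
  have hMw : M *ᵥ w = v := by
    rw [hw, Matrix.mulVec_mulVec, Matrix.mul_nonsing_inv _ hdet, Matrix.one_mulVec]
  have heq : qRe M⁻¹ v = 2 * (star v ⬝ᵥ w).re - qRe M w := by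
    have h1' : qRe M w = (star v ⬝ᵥ w).re := by
      rw [qRe, hMw, star_dot_comm, Complex.conj_re]
    have h2' : (star v ⬝ᵥ w).re = qRe M⁻¹ v := by rw [hw, qRe]
    rw [h1', h2']
    ring
  have hsplit : qRe M w = (1-s) * qRe A w + s * qRe B w := qRe_smul_add A B (1-s) s w
  have hA' := inv_qf_lower hA v w
  have hB' := inv_qf_lower hB v w
  have e : qRe M⁻¹ v = (1-s) * (2 * (star v ⬝ᵥ w).re - qRe A w)
      + s * (2 * (star v ⬝ᵥ w).re - qRe B w) := by
    rw [heq, hsplit]; ring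
  rw [e]
  have hA'' := mul_le_mul_of_nonneg_left hA' (by linarith : (0:ℝ) ≤ 1 - s)
  have hB'' := mul_le_mul_of_nonneg_left hB' h0
  nlinarith

/-! ### Scalar integral layer -/

open MeasureTheory Set in
noncomputable def Cb (β : ℝ) : ℝ := ∫ s in Ioi (0:ℝ), s^(β-1) / (1+s)

section Integrals

open MeasureTheory Set

variable {β : ℝ}

lemma phi_meas : Measurable (fun s : ℝ => s^(β-1)/(1+s)) :=
  (measurable_id.pow_const _).div (measurable_const.add measurable_id)

lemma phi_integrable (hβ0 : 0 < β) (hβ1 : β < 1) :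
    IntegrableOn (fun s : ℝ => s^(β-1)/(1+s)) (Ioi 0) := by
  have hsplit : Ioc (0:ℝ) 1 ∪ Ioi 1 = Ioi 0 := Ioc_union_Ioi_eq_Ioi zero_le_one
  rw [← hsplit]
  apply IntegrableOn.union
  · have hbase : IntegrableOn (fun s : ℝ => s^(β-1)) (Ioc 0 1) := by
      have h := intervalIntegral.intervalIntegrable_rpow' (a := 0) (b := 1) (r := β - 1)
        (by linarith)
      rwa [intervalIntegrable_iff_integrableOn_Ioc_of_le zero_le_one] at h
    refine Integrable.mono hbase (phi_meas.aestronglyMeasurable.restrict) ?_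
    filter_upwards [ae_restrict_mem measurableSet_Ioc] with s hs
    have hs0 : 0 < s := hs.1
    have h1s : (1:ℝ) ≤ 1 + s := by linarith
    rw [Real.norm_eq_abs, Real.norm_eq_abs, abs_of_nonneg (by positivity),
      abs_of_nonneg (Real.rpow_nonneg hs0.le _)]
    calc s^(β-1)/(1+s) ≤ s^(β-1)/1 := by
          apply div_le_div_of_nonneg_left (Real.rpow_nonneg hs0.le _) one_pos h1s
      _ = s^(β-1) := by rw [div_one]
  · have hbase : IntegrableOn (fun s : ℝ => s^(β-2)) (Ioi 1) :=
      integrableOn_Ioi_rpow_of_lt (by linarith) one_pos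
    refine Integrable.mono hbase (phi_meas.aestronglyMeasurable.restrict) ?_
    filter_upwards [ae_restrict_mem measurableSet_Ioi] with s hs
    have hs0 : (0:ℝ) < s := lt_trans one_pos hs
    rw [Real.norm_eq_abs, Real.norm_eq_abs, abs_of_nonneg (by positivity),
      abs_of_nonneg (Real.rpow_nonneg hs0.le _)]
    calc s^(β-1)/(1+s) ≤ s^(β-1)/s := by
          apply div_le_div_of_nonneg_left (Real.rpow_nonneg hs0.le _) hs0 (by linarith)
      _ = s^(β-2) := by
          conv_rhs => rw [show β-2 = β-1-1 by ring, Real.rpow_sub hs0, Real.rpow_one]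

lemma Cb_pos (hβ0 : 0 < β) (hβ1 : β < 1) : 0 < Cb β := by
  have hint := phi_integrable hβ0 hβ1
  have hnonneg : 0 ≤ᵐ[volume.restrict (Ioi (0:ℝ))] (fun s : ℝ => s^(β-1)/(1+s)) := by
    filter_upwards [ae_restrict_mem measurableSet_Ioi] with s hs
    have : (0:ℝ) < s := hs
    positivity
  rw [Cb]
  rw [setIntegral_pos_iff_support_of_nonneg_ae hnonneg hint]
  have hsub : Ioi (0:ℝ) ⊆ Function.support (fun s : ℝ => s^(β-1)/(1+s)) ∩ Ioi 0 := by
    intro s hs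
    have hs0 : (0:ℝ) < s := hs
    refine ⟨?_, hs⟩
    have : 0 < s^(β-1)/(1+s) := by positivity
    exact Function.mem_support.mpr this.ne'
  calc (0:ENNReal) < volume (Ioi (0:ℝ)) := by simp [Real.volume_Ioi]
    _ ≤ volume (Function.support (fun s : ℝ => s^(β-1)/(1+s)) ∩ Ioi 0) := measure_mono hsub

lemma phi_comp_eq {μ : ℝ} (hμ : 0 < μ) {s : ℝ} (hs : 0 < s) :
    μ^(β-1) * ((μ⁻¹*s)^(β-1)/(1+μ⁻¹*s)) = s^(β-1) * (μ/(μ+s)) := by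
  have h1 : (μ⁻¹*s)^(β-1) = μ⁻¹^(β-1) * s^(β-1) :=
    Real.mul_rpow (by positivity) hs.le
  have h2 : (1+μ⁻¹*s) = (μ+s)/μ := by field_simp
  have h3 : μ^(β-1) * μ⁻¹^(β-1) = 1 := by
    rw [← Real.mul_rpow hμ.le (by positivity), mul_inv_cancel₀ hμ.ne', Real.one_rpow]
  rw [h1, h2, div_eq_mul_inv _ ((μ+s)/μ), inv_div]
  rw [show μ^(β-1) * (μ⁻¹^(β-1)*s^(β-1)*(μ/(μ+s))) = (μ^(β-1)*μ⁻¹^(β-1))*(s^(β-1)*(μ/(μ+s)))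
    from by ring, h3, one_mul]

lemma mu_integrable {μ : ℝ} (hμ : 0 < μ) (hβ0 : 0 < β) (hβ1 : β < 1) :
    IntegrableOn (fun s : ℝ => s^(β-1) * (μ/(μ+s))) (Ioi 0) := by
  have hphi := phi_integrable hβ0 hβ1
  have hinv : (0:ℝ) < μ⁻¹ := by positivity
  have hcomp : IntegrableOn (fun s : ℝ => (μ⁻¹*s)^(β-1)/(1+μ⁻¹*s)) (Ioi 0) := by
    have := (integrableOn_Ioi_comp_mul_left_iff (fun u : ℝ => u^(β-1)/(1+u)) 0 hinv).mpr
    simpa [mul_zero] using this (by simpa using hphi)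
  have h5 := (hcomp.const_mul (μ^(β-1)))
  refine IntegrableOn.congr_fun h5 ?_ measurableSet_Ioi
  intro s hs
  exact phi_comp_eq hμ hs

lemma mu_integral {μ : ℝ} (hμ : 0 < μ) (hβ0 : 0 < β) (hβ1 : β < 1) :
    ∫ s in Ioi (0:ℝ), s^(β-1) * (μ/(μ+s)) = μ^β * Cb β := by
  have hinv : (0:ℝ) < μ⁻¹ := by positivity
  have e1 : ∫ s in Ioi (0:ℝ), s^(β-1) * (μ/(μ+s))
      = ∫ s in Ioi (0:ℝ), μ^(β-1) * ((μ⁻¹*s)^(β-1)/(1+μ⁻¹*s)) := by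
    apply setIntegral_congr_fun measurableSet_Ioi
    intro s hs
    exact (phi_comp_eq hμ hs).symm
  rw [e1, MeasureTheory.integral_const_mul]
  have e2 : ∫ s in Ioi (0:ℝ), ((μ⁻¹*s)^(β-1)/(1+μ⁻¹*s)) = μ * Cb β := by
    have := MeasureTheory.integral_comp_mul_left_Ioi (fun u : ℝ => u^(β-1)/(1+u)) 0 hinv
    simp only [mul_zero] at this
    rw [this, Cb]
    rw [smul_eq_mul, inv_inv]
  rw [e2, ← mul_assoc]
  congr 1
  calc μ^(β-1) * μ = μ^(β-1) * μ^(1:ℝ) := by rw [Real.rpow_one]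
    _ = μ^β := by rw [← Real.rpow_add hμ]; norm_num

end Integrals

/-! ### The trace pairing and its integral representation -/

/-- `trRe W r Y = Re Tr[W^r Y]`. -/
noncomputable def trRe (Wm : Matrix (Fin d) (Fin d) ℂ) (r : ℝ)
    (Y : Matrix (Fin d) (Fin d) ℂ) : ℝ :=
  ((matRpow Wm r * Y).trace).re

lemma trRe_pair {Wm : Matrix (Fin d) (Fin d) ℂ} (hW : Wm.IsHermitian) (r : ℝ)
    (V : Matrix.unitaryGroup (Fin d) ℂ) (g : Fin d → ℝ) :
    trRe Wm r (cdg V g) = ∑ i, ∑ k, (hW.eigenvalues i ^ r) * g k *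
      ovl hW.eigenvectorUnitary V i k := by
  rw [trRe, matRpow_eq hW, traceRe_cdg_mul_cdg]

lemma trRe_qRe {Wm : Matrix (Fin d) (Fin d) ℂ} (hW : Wm.IsHermitian) (r : ℝ)
    (Y : Matrix (Fin d) (Fin d) ℂ) :
    trRe Wm r Y = ∑ i, (hW.eigenvalues i ^ r) * qRe Y (colv hW.eigenvectorUnitary i) := by
  rw [trRe, matRpow_eq hW, traceRe_cdg_mul]

lemma trRe_smulY (Wm : Matrix (Fin d) (Fin d) ℂ) (r : ℝ) (c : ℝ)
    (Y : Matrix (Fin d) (Fin d) ℂ) :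
    trRe Wm r (((c:ℝ):ℂ) • Y) = c * trRe Wm r Y := by
  rw [trRe, Matrix.mul_smul, Matrix.trace_smul, trRe]
  simp only [smul_eq_mul, Complex.mul_re, Complex.ofReal_re, Complex.ofReal_im]
  ring

open MeasureTheory Set in
lemma trRe_rpow_integral {Wm X : Matrix (Fin d) (Fin d) ℂ} (hW : Wm.PosSemidef) (r : ℝ)
    (hX : X.PosDef) {β : ℝ} (hβ0 : 0 < β) (hβ1 : β < 1) :
    IntegrableOn (fun s : ℝ => s^(β-1) * ((∑ i, hW.1.eigenvalues i ^ r)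
      - s * trRe Wm r ((X + (s:ℂ) • 1)⁻¹))) (Ioi 0) ∧
    trRe Wm r (matRpow X β) * Cb β = ∫ s in Ioi (0:ℝ),
      s^(β-1) * ((∑ i, hW.1.eigenvalues i ^ r) - s * trRe Wm r ((X + (s:ℂ) • 1)⁻¹)) := by
  have hμpos : ∀ k, 0 < hX.1.eigenvalues k := fun k => hX.eigenvalues_pos k
  set lam := fun i => hW.1.eigenvalues i ^ r with hlam
  set mu := hX.1.eigenvalues with hmu
  set Sq := fun i k => ovl hW.1.eigenvectorUnitary hX.1.eigenvectorUnitary i k with hSq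
  set G := fun s : ℝ => ∑ i, ∑ k, (lam i * Sq i k) * (s^(β-1) * (mu k/(mu k + s))) with hG
  have hGF : ∀ s ∈ Ioi (0:ℝ), s^(β-1) * ((∑ i, lam i)
      - s * trRe Wm r ((X + (s:ℂ)•1)⁻¹)) = G s := by
    intro s hs
    have hs0 : (0:ℝ) < s := hs
    rw [resolvent_eq hX hs0, trRe_pair hW.1]
    have hτ : (∑ i, lam i) = ∑ i, ∑ k, lam i * Sq i k := by
      refine Finset.sum_congr rfl fun i _ => ?_
      rw [← Finset.mul_sum, ovl_row_sum, mul_one]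
    rw [hτ, hG]
    rw [Finset.mul_sum, ← Finset.sum_sub_distrib, Finset.mul_sum]
    refine Finset.sum_congr rfl fun i _ => ?_
    rw [Finset.mul_sum, ← Finset.sum_sub_distrib, Finset.mul_sum]
    refine Finset.sum_congr rfl fun k _ => ?_
    have hmuk : 0 < mu k + s := by have := hμpos k; linarith
    have e1 : mu k / (mu k + s) = 1 - s * (mu k + s)⁻¹ := by
      field_simp
      ring
    rw [e1]
    ring
  have hGint : IntegrableOn G (Ioi 0) := by
    rw [hG]
    apply integrable_finset_sum
    intro i _
    apply integrable_finset_sum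
    intro k _
    exact (mu_integrable (hμpos k) hβ0 hβ1).const_mul _
  have hFint : IntegrableOn (fun s : ℝ => s^(β-1) * ((∑ i, lam i)
      - s * trRe Wm r ((X + (s:ℂ)•1)⁻¹))) (Ioi 0) :=
    hGint.congr_fun (fun s hs => (hGF s hs).symm) measurableSet_Ioi
  refine ⟨hFint, ?_⟩
  have e2 : ∫ s in Ioi (0:ℝ), s^(β-1) * ((∑ i, lam i) - s * trRe Wm r ((X + (s:ℂ)•1)⁻¹))
      = ∫ s in Ioi (0:ℝ), G s :=
    setIntegral_congr_fun measurableSet_Ioi hGF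
  rw [e2]
  have e3 : ∫ s in Ioi (0:ℝ), G s = ∑ i, ∑ k, (lam i * Sq i k) * (mu k ^ β * Cb β) := by
    rw [hG]
    rw [integral_finset_sum _ (fun i _ => integrable_finset_sum _
      (fun k _ => (mu_integrable (hμpos k) hβ0 hβ1).const_mul _))]
    refine Finset.sum_congr rfl fun i _ => ?_
    rw [integral_finset_sum _ (fun k _ => (mu_integrable (hμpos k) hβ0 hβ1).const_mul _)]
    refine Finset.sum_congr rfl fun k _ => ?_
    rw [MeasureTheory.integral_const_mul, mu_integral (hμpos k) hβ0 hβ1]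
  rw [e3]
  have e4 : trRe Wm r (matRpow X β) = ∑ i, ∑ k, lam i * mu k ^ β * Sq i k := by
    rw [matRpow_eq hX.1, trRe_pair hW.1]
  rw [e4, Finset.sum_mul]
  refine Finset.sum_congr rfl fun i _ => ?_
  rw [Finset.sum_mul]
  refine Finset.sum_congr rfl fun k _ => ?_
  ring

open MeasureTheory Set in
lemma trRe_rpow_concave {Wm A B : Matrix (Fin d) (Fin d) ℂ} (hW : Wm.PosSemidef) (r : ℝ)
    (hA : A.PosDef) (hB : B.PosDef) {s : ℝ} (h0 : 0 ≤ s) (h1 : s ≤ 1)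
    {β : ℝ} (hβ0 : 0 < β) (hβ1 : β < 1) :
    (1-s) * trRe Wm r (matRpow A β) + s * trRe Wm r (matRpow B β)
      ≤ trRe Wm r (matRpow (((1-s:ℝ):ℂ) • A + ((s:ℝ):ℂ) • B) β) := by
  set M := ((1-s:ℝ):ℂ) • A + ((s:ℝ):ℂ) • B with hMdef
  have hM : M.PosDef := posDef_combo hA hB h0 h1
  obtain ⟨hIA, hEA⟩ := trRe_rpow_integral hW r hA hβ0 hβ1
  obtain ⟨hIB, hEB⟩ := trRe_rpow_integral hW r hB hβ0 hβ1
  obtain ⟨hIM, hEM⟩ := trRe_rpow_integral hW r hM hβ0 hβ1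
  have hCb := Cb_pos hβ0 hβ1
  rw [← mul_le_mul_iff_of_pos_right hCb]
  rw [add_mul, mul_assoc, mul_assoc, hEA, hEB, hEM]
  set τ := ∑ i, hW.1.eigenvalues i ^ r with hτ
  have eL : (1-s) * ∫ u in Ioi (0:ℝ), u^(β-1) * (τ - u * trRe Wm r ((A + (u:ℂ)•1)⁻¹))
      = ∫ u in Ioi (0:ℝ), (1-s) * (u^(β-1) * (τ - u * trRe Wm r ((A + (u:ℂ)•1)⁻¹))) :=
    (MeasureTheory.integral_const_mul _ _).symm
  have eR : s * ∫ u in Ioi (0:ℝ), u^(β-1) * (τ - u * trRe Wm r ((B + (u:ℂ)•1)⁻¹))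
      = ∫ u in Ioi (0:ℝ), s * (u^(β-1) * (τ - u * trRe Wm r ((B + (u:ℂ)•1)⁻¹))) :=
    (MeasureTheory.integral_const_mul _ _).symm
  rw [eL, eR, ← MeasureTheory.integral_add (hIA.const_mul _) (hIB.const_mul _)]
  apply setIntegral_mono_on ((hIA.const_mul _).add (hIB.const_mul _)) hIM measurableSet_Ioi
  intro u hu
  have hu0 : (0:ℝ) < u := hu
  -- key pointwise inequality
  have hApd : (A + (u:ℂ)•1).PosDef := by
    have h1' : (((u:ℝ):ℂ) • (1 : Matrix (Fin d) (Fin d) ℂ)).PosSemidef :=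
      posSemidef_ofReal_smul hu0.le Matrix.PosDef.one.posSemidef
    exact hA.add_posSemidef h1'
  have hBpd : (B + (u:ℂ)•1).PosDef := by
    have h1' : (((u:ℝ):ℂ) • (1 : Matrix (Fin d) (Fin d) ℂ)).PosSemidef :=
      posSemidef_ofReal_smul hu0.le Matrix.PosDef.one.posSemidef
    exact hB.add_posSemidef h1'
  have hMid : M + (u:ℂ)•1 = ((1-s:ℝ):ℂ) • (A + (u:ℂ)•1) + ((s:ℝ):ℂ) • (B + (u:ℂ)•1) := by
    have e : ((1-s:ℝ):ℂ) • ((u:ℂ) • (1 : Matrix (Fin d) (Fin d) ℂ))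
        + ((s:ℝ):ℂ) • ((u:ℂ) • (1 : Matrix (Fin d) (Fin d) ℂ))
        = (u:ℂ) • (1 : Matrix (Fin d) (Fin d) ℂ) := by
      rw [← add_smul, show (((1-s:ℝ):ℂ) + ((s:ℝ):ℂ)) = 1 from by push_cast; ring, one_smul]
    calc M + (u:ℂ)•1 = ((1-s:ℝ):ℂ) • A + ((s:ℝ):ℂ) • B
          + (((1-s:ℝ):ℂ) • ((u:ℂ) • (1 : Matrix (Fin d) (Fin d) ℂ))
            + ((s:ℝ):ℂ) • ((u:ℂ) • (1 : Matrix (Fin d) (Fin d) ℂ))) := by rw [e, hMdef]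
      _ = ((1-s:ℝ):ℂ) • (A + (u:ℂ)•1) + ((s:ℝ):ℂ) • (B + (u:ℂ)•1) := by
          rw [smul_add, smul_add]; abel
  have hkey : trRe Wm r ((M + (u:ℂ)•1)⁻¹)
      ≤ (1-s) * trRe Wm r ((A + (u:ℂ)•1)⁻¹) + s * trRe Wm r ((B + (u:ℂ)•1)⁻¹) := by
    rw [hMid]
    rw [trRe_qRe hW.1, trRe_qRe hW.1, trRe_qRe hW.1]
    rw [Finset.mul_sum, Finset.mul_sum, ← Finset.sum_add_distrib]
    apply Finset.sum_le_sum
    intro i _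
    have hcoef : 0 ≤ hW.1.eigenvalues i ^ r := Real.rpow_nonneg (hW.eigenvalues_nonneg i) r
    have := qRe_inv_combo hApd hBpd h0 h1 (colv hW.1.eigenvectorUnitary i)
    calc hW.1.eigenvalues i ^ r * qRe ((((1-s:ℝ)):ℂ) • (A + (u:ℂ)•1)
          + ((s:ℝ):ℂ) • (B + (u:ℂ)•1))⁻¹ (colv hW.1.eigenvectorUnitary i)
        ≤ hW.1.eigenvalues i ^ r * ((1-s) * qRe (A + (u:ℂ)•1)⁻¹ (colv hW.1.eigenvectorUnitary i)
          + s * qRe (B + (u:ℂ)•1)⁻¹ (colv hW.1.eigenvectorUnitary i)) :=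
          mul_le_mul_of_nonneg_left this hcoef
      _ = (1-s) * (hW.1.eigenvalues i ^ r * qRe (A + (u:ℂ)•1)⁻¹ (colv hW.1.eigenvectorUnitary i))
          + s * (hW.1.eigenvalues i ^ r * qRe (B + (u:ℂ)•1)⁻¹ (colv hW.1.eigenvectorUnitary i)) := by
          ring
  have hupow : 0 ≤ u^(β-1) := Real.rpow_nonneg hu0.le _
  simp only [Pi.add_apply]
  nlinarith [mul_le_mul_of_nonneg_left hkey (mul_nonneg hupow hu0.le)]

open MeasureTheory Set in
lemma trRe_rpow_smul {Wm X : Matrix (Fin d) (Fin d) ℂ} (hW : Wm.PosSemidef) (r : ℝ)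
    (hX : X.PosDef) {c : ℝ} (hc : 0 < c) {β : ℝ} (hβ0 : 0 < β) (hβ1 : β < 1) :
    trRe Wm r (matRpow (((c:ℝ):ℂ) • X) β) = c^β * trRe Wm r (matRpow X β) := by
  have hcX : (((c:ℝ):ℂ) • X).PosDef := posDef_ofReal_smul hc hX
  obtain ⟨hIX, hEX⟩ := trRe_rpow_integral hW r hX hβ0 hβ1
  obtain ⟨hIC, hEC⟩ := trRe_rpow_integral hW r hcX hβ0 hβ1
  have hCb := Cb_pos hβ0 hβ1
  set τ := ∑ i, hW.1.eigenvalues i ^ r with hτ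
  set F := fun u : ℝ => u^(β-1) * (τ - u * trRe Wm r ((X + (u:ℂ)•1)⁻¹)) with hF
  -- pointwise: integrand for cX at s equals c^(β-1) * F (c⁻¹ * s)
  have hpw : ∀ s ∈ Ioi (0:ℝ), s^(β-1) * (τ - s * trRe Wm r ((((c:ℝ):ℂ) • X + (s:ℂ)•1)⁻¹))
      = c^(β-1) * F (c⁻¹ * s) := by
    intro s hs
    have hs0 : (0:ℝ) < s := hs
    have hu0 : (0:ℝ) < c⁻¹ * s := by positivity
    -- (cX + s)⁻¹ = c⁻¹ • (X + (c⁻¹ s))⁻¹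
    have hXu : (X + ((c⁻¹*s : ℝ):ℂ)•1).PosDef := by
      have h1' : (((c⁻¹*s:ℝ):ℂ) • (1 : Matrix (Fin d) (Fin d) ℂ)).PosSemidef :=
        posSemidef_ofReal_smul hu0.le Matrix.PosDef.one.posSemidef
      exact hX.add_posSemidef h1'
    have hsm : ((c:ℝ):ℂ) • X + (s:ℂ)•1 = ((c:ℝ):ℂ) • (X + ((c⁻¹*s : ℝ):ℂ)•1) := by
      rw [smul_add, smul_smul]
      have e0 : ((c:ℝ):ℂ) * ((c⁻¹*s : ℝ):ℂ) = (s:ℂ) := by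
        push_cast
        field_simp
      rw [e0]
    have hinv : (((c:ℝ):ℂ) • X + (s:ℂ)•1)⁻¹
        = ((c⁻¹:ℝ):ℂ) • (X + ((c⁻¹*s : ℝ):ℂ)•1)⁻¹ := by
      apply Matrix.inv_eq_left_inv
      rw [hsm, Matrix.smul_mul, Matrix.mul_smul, smul_smul,
        Matrix.nonsing_inv_mul _ hXu.det_pos.ne'.isUnit]
      rw [show (((c⁻¹:ℝ):ℂ) * ((c:ℝ):ℂ)) = 1 by
        rw [← Complex.ofReal_mul]; rw [inv_mul_cancel₀ hc.ne']; rfl]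
      rw [one_smul]
    have htr : trRe Wm r ((((c:ℝ):ℂ) • X + (s:ℂ)•1)⁻¹)
        = c⁻¹ * trRe Wm r ((X + ((c⁻¹*s : ℝ):ℂ)•1)⁻¹) := by
      rw [hinv, trRe_smulY]
    have hrpow : s^(β-1) = c^(β-1) * (c⁻¹*s)^(β-1) := by
      rw [Real.mul_rpow (by positivity) hs0.le, ← mul_assoc,
        ← Real.mul_rpow hc.le (by positivity), mul_inv_cancel₀ hc.ne', Real.one_rpow, one_mul]
    rw [htr, hrpow, hF]
    have : ((c⁻¹*s : ℝ):ℂ) = ((c⁻¹*s : ℝ):ℂ) := rfl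
    push_cast
    ring
  -- conclude by change of variables
  have e1 : ∫ s in Ioi (0:ℝ), s^(β-1) * (τ - s * trRe Wm r ((((c:ℝ):ℂ) • X + (s:ℂ)•1)⁻¹))
      = ∫ s in Ioi (0:ℝ), c^(β-1) * F (c⁻¹ * s) :=
    setIntegral_congr_fun measurableSet_Ioi hpw
  have e2 : ∫ s in Ioi (0:ℝ), F (c⁻¹ * s) = c * ∫ s in Ioi (0:ℝ), F s := by
    have := MeasureTheory.integral_comp_mul_left_Ioi F 0 (by positivity : (0:ℝ) < c⁻¹)
    simp only [mul_zero] at this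
    rw [this, smul_eq_mul, inv_inv]
  have e3 : trRe Wm r (matRpow (((c:ℝ):ℂ) • X) β) * Cb β
      = c^β * (trRe Wm r (matRpow X β) * Cb β) := by
    rw [hEC, hEX, e1, MeasureTheory.integral_const_mul, e2, ← hF]
    rw [← mul_assoc]
    congr 1
    rw [mul_comm (c^(β-1)) c]
    calc c * c^(β-1) = c^(1:ℝ) * c^(β-1) := by rw [Real.rpow_one]
      _ = c^β := by rw [← Real.rpow_add hc]; norm_num
  have e4 : trRe Wm r (matRpow (((c:ℝ):ℂ) • X) β) * Cb β
      = (c^β * trRe Wm r (matRpow X β)) * Cb β := by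
    rw [e3]; ring
  exact mul_right_cancel₀ hCb.ne' e4

/-- superadditivity / concavity of `Q ↦ (Tr[W^r Q^β])^{1/β}` along a segment -/
lemma pow_concave_seg {Wm R0 R1 : Matrix (Fin d) (Fin d) ℂ} (hW : Wm.PosSemidef) (r : ℝ)
    (hR0 : R0.PosDef) (hR1 : R1.PosDef) {u : ℝ} (h0 : 0 ≤ u) (h1 : u ≤ 1)
    {β : ℝ} (hβ0 : 0 < β) (hβ1 : β < 1)
    (hb0 : 0 < trRe Wm r (matRpow R0 β)) (hb1 : 0 < trRe Wm r (matRpow R1 β)) :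
    (1-u) * (trRe Wm r (matRpow R0 β))^(1/β) + u * (trRe Wm r (matRpow R1 β))^(1/β)
      ≤ (trRe Wm r (matRpow (((1-u:ℝ):ℂ) • R0 + ((u:ℝ):ℂ) • R1) β))^(1/β) := by
  have hMpd : (((1-u:ℝ):ℂ) • R0 + ((u:ℝ):ℂ) • R1).PosDef := posDef_combo hR0 hR1 h0 h1
  obtain ⟨b0, hb0eq⟩ : ∃ b, trRe Wm r (matRpow R0 β) = b := ⟨_, rfl⟩
  obtain ⟨b1, hb1eq⟩ : ∃ b, trRe Wm r (matRpow R1 β) = b := ⟨_, rfl⟩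
  obtain ⟨bM, hbMeq⟩ : ∃ b,
      trRe Wm r (matRpow (((1-u:ℝ):ℂ) • R0 + ((u:ℝ):ℂ) • R1) β) = b := ⟨_, rfl⟩
  rw [hb0eq] at hb0
  rw [hb1eq] at hb1
  rw [hb0eq, hb1eq, hbMeq]
  set c0 := b0^(1/β) with hc0def
  set c1 := b1^(1/β) with hc1def
  have hc0 : 0 < c0 := Real.rpow_pos_of_pos hb0 _
  have hc1 : 0 < c1 := Real.rpow_pos_of_pos hb1 _
  set c := (1-u)*c0 + u*c1 with hcdef
  have hcpos : 0 < c := by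
    rw [hcdef]
    rcases eq_or_lt_of_le h1 with h | h
    · rw [h]; simpa using hc1
    · nlinarith [mul_pos (show (0:ℝ) < 1-u by linarith) hc0, mul_nonneg h0 hc1.le]
  set t := u * c1 / c with htdef
  have ht0 : 0 ≤ t := div_nonneg (mul_nonneg h0 hc1.le) hcpos.le
  have ht1 : t ≤ 1 := by
    rw [htdef, div_le_one hcpos, hcdef]
    nlinarith [mul_pos (show (0:ℝ) < 1 - u + u from by norm_num) hc0]
  have h1t : 1 - t = (1-u) * c0 / c := by
    rw [htdef, hcdef]
    have hc' : (1-u) * c0 + u * c1 ≠ 0 := hcpos.ne'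
    field_simp
    ring
  have hA' : ((((c0⁻¹:ℝ)):ℂ) • R0).PosDef := posDef_ofReal_smul (inv_pos.mpr hc0) hR0
  have hB' : ((((c1⁻¹:ℝ)):ℂ) • R1).PosDef := posDef_ofReal_smul (inv_pos.mpr hc1) hR1
  have hc0b : c0^β = b0 := by
    rw [hc0def, ← Real.rpow_mul hb0.le, one_div_mul_cancel hβ0.ne', Real.rpow_one]
  have hc1b : c1^β = b1 := by
    rw [hc1def, ← Real.rpow_mul hb1.le, one_div_mul_cancel hβ0.ne', Real.rpow_one]
  have hbA' : trRe Wm r (matRpow ((((c0⁻¹:ℝ)):ℂ) • R0) β) = 1 := by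
    rw [trRe_rpow_smul hW r hR0 (inv_pos.mpr hc0) hβ0 hβ1, Real.inv_rpow hc0.le, hc0b, hb0eq]
    exact inv_mul_cancel₀ hb0.ne'
  have hbB' : trRe Wm r (matRpow ((((c1⁻¹:ℝ)):ℂ) • R1) β) = 1 := by
    rw [trRe_rpow_smul hW r hR1 (inv_pos.mpr hc1) hβ0 hβ1, Real.inv_rpow hc1.le, hc1b, hb1eq]
    exact inv_mul_cancel₀ hb1.ne'
  have hcombo : ((1-t:ℝ):ℂ) • ((((c0⁻¹:ℝ)):ℂ) • R0) + ((t:ℝ):ℂ) • ((((c1⁻¹:ℝ)):ℂ) • R1)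
      = ((c⁻¹:ℝ):ℂ) • (((1-u:ℝ):ℂ) • R0 + ((u:ℝ):ℂ) • R1) := by
    rw [smul_add, smul_smul, smul_smul, smul_smul, smul_smul]
    have e0 : ((1-t:ℝ):ℂ) * ((c0⁻¹:ℝ):ℂ) = ((c⁻¹:ℝ):ℂ) * ((1-u:ℝ):ℂ) := by
      rw [← Complex.ofReal_mul, ← Complex.ofReal_mul]
      congr 1
      rw [h1t]
      field_simp
    have e1 : ((t:ℝ):ℂ) * ((c1⁻¹:ℝ):ℂ) = ((c⁻¹:ℝ):ℂ) * ((u:ℝ):ℂ) := by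
      rw [← Complex.ofReal_mul, ← Complex.ofReal_mul]
      congr 1
      rw [htdef]
      field_simp
    rw [e0, e1]
  have hconc := trRe_rpow_concave hW r hA' hB' ht0 ht1 hβ0 hβ1
  rw [hbA', hbB', hcombo, trRe_rpow_smul hW r hMpd (inv_pos.mpr hcpos) hβ0 hβ1, hbMeq] at hconc
  have hone : (1-t) * 1 + t * 1 = (1:ℝ) := by ring
  rw [hone, Real.inv_rpow hcpos.le] at hconc
  have hcbne : (0:ℝ) < c^β := Real.rpow_pos_of_pos hcpos β
  have hMb : c^β ≤ bM := by
    have h5 := mul_le_mul_of_nonneg_left hconc hcbne.le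
    rw [mul_one, ← mul_assoc, mul_inv_cancel₀ hcbne.ne', one_mul] at h5
    exact h5
  have hcc : c = (c^β)^(1/β) := by
    rw [← Real.rpow_mul hcpos.le, mul_one_div, div_self hβ0.ne', Real.rpow_one]
  have hbM0 : (0:ℝ) ≤ c^β := hcbne.le
  calc (1-u) * b0^(1/β) + u * b1^(1/β) = c := by rw [hcdef, hc0def, hc1def]
    _ = (c^β)^(1/β) := hcc
    _ ≤ bM^(1/β) := Real.rpow_le_rpow hbM0 hMb (le_of_lt (by positivity))


/-! ### Bounds on the trace pairing -/

lemma b_pos {Wm X : Matrix (Fin d) (Fin d) ℂ} (hW : Wm.PosSemidef) (hWtr : Wm.trace = 1)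
    (hX : X.PosDef) (r β' : ℝ) : 0 < trRe Wm r (matRpow X β') := by
  rw [matRpow_eq hX.1, trRe_pair hW.1]
  have hlam : ∀ i, 0 ≤ hW.1.eigenvalues i := hW.eigenvalues_nonneg
  have hsum1 : ∑ i, hW.1.eigenvalues i = 1 := by
    have h := sum_eigenvalues_eq_trace hW.1
    rw [hWtr] at h
    exact_mod_cast h
  have hex : ∃ i, 0 < hW.1.eigenvalues i := by
    by_contra hno
    push_neg at hno
    have h0 : ∑ i, hW.1.eigenvalues i = 0 :=
      Finset.sum_eq_zero (fun i _ => le_antisymm (hno i) (hlam i))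
    rw [hsum1] at h0
    norm_num at h0
  obtain ⟨i0, hi0⟩ := hex
  have hrow := ovl_row_sum hW.1.eigenvectorUnitary hX.1.eigenvectorUnitary i0
  have hexk : ∃ k, 0 < ovl hW.1.eigenvectorUnitary hX.1.eigenvectorUnitary i0 k := by
    by_contra hno
    push_neg at hno
    have h0 : ∑ k, ovl hW.1.eigenvectorUnitary hX.1.eigenvectorUnitary i0 k = 0 :=
      Finset.sum_eq_zero (fun k _ => le_antisymm (hno k) (ovl_nonneg _ _ _ _))
    rw [hrow] at h0
    norm_num at h0
  obtain ⟨k0, hk0⟩ := hexk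
  have hterm_nonneg : ∀ i k, 0 ≤ hW.1.eigenvalues i ^ r * hX.1.eigenvalues k ^ β' *
      ovl hW.1.eigenvectorUnitary hX.1.eigenvectorUnitary i k := fun i k =>
    mul_nonneg (mul_nonneg (Real.rpow_nonneg (hlam i) r)
      (Real.rpow_nonneg (hX.eigenvalues_pos k).le β')) (ovl_nonneg _ _ _ _)
  apply Finset.sum_pos'
  · intro i _
    exact Finset.sum_nonneg fun k _ => hterm_nonneg i k
  · refine ⟨i0, Finset.mem_univ _, Finset.sum_pos' (fun k _ => hterm_nonneg i0 k)
      ⟨k0, Finset.mem_univ _, ?_⟩⟩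
    exact mul_pos (mul_pos (Real.rpow_pos_of_pos hi0 r)
      (Real.rpow_pos_of_pos (hX.eigenvalues_pos k0) β')) hk0

lemma b_le_one {Wm X : Matrix (Fin d) (Fin d) ℂ} (hW : Wm.PosSemidef) (hWtr : Wm.trace = 1)
    (hX : X.PosDef) (hXtr : X.trace = 1) {a β' : ℝ} (ha0 : 0 ≤ a) (hb0 : 0 ≤ β')
    (hab : a + β' = 1) : trRe Wm a (matRpow X β') ≤ 1 := by
  rw [matRpow_eq hX.1, trRe_pair hW.1]
  have hlam : ∀ i, 0 ≤ hW.1.eigenvalues i := hW.eigenvalues_nonneg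
  have hmu : ∀ k, 0 ≤ hX.1.eigenvalues k := fun k => (hX.eigenvalues_pos k).le
  have hsumW : ∑ i, hW.1.eigenvalues i = 1 := by
    have h := sum_eigenvalues_eq_trace hW.1
    rw [hWtr] at h
    exact_mod_cast h
  have hsumX : ∑ k, hX.1.eigenvalues k = 1 := by
    have h := sum_eigenvalues_eq_trace hX.1
    rw [hXtr] at h
    exact_mod_cast h
  set U := hW.1.eigenvectorUnitary
  set V := hX.1.eigenvectorUnitary
  have hterm : ∀ i k, hW.1.eigenvalues i ^ a * hX.1.eigenvalues k ^ β' * ovl U V i k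
      ≤ (a * hW.1.eigenvalues i + β' * hX.1.eigenvalues k) * ovl U V i k := fun i k =>
    mul_le_mul_of_nonneg_right
      (Real.geom_mean_le_arith_mean2_weighted ha0 hb0 (hlam i) (hmu k) hab)
      (ovl_nonneg _ _ _ _)
  calc ∑ i, ∑ k, hW.1.eigenvalues i ^ a * hX.1.eigenvalues k ^ β' * ovl U V i k
      ≤ ∑ i, ∑ k, (a * hW.1.eigenvalues i + β' * hX.1.eigenvalues k) * ovl U V i k :=
        Finset.sum_le_sum fun i _ => Finset.sum_le_sum fun k _ => hterm i k
    _ = ∑ i, ∑ k, (a * hW.1.eigenvalues i) * ovl U V i k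
        + ∑ i, ∑ k, (β' * hX.1.eigenvalues k) * ovl U V i k := by
        rw [← Finset.sum_add_distrib]
        refine Finset.sum_congr rfl fun i _ => ?_
        rw [← Finset.sum_add_distrib]
        refine Finset.sum_congr rfl fun k _ => ?_
        ring
    _ = a * (∑ i, hW.1.eigenvalues i) + β' * (∑ k, hX.1.eigenvalues k) := by
        congr 1
        · rw [Finset.mul_sum]
          refine Finset.sum_congr rfl fun i _ => ?_
          rw [← Finset.mul_sum, ovl_row_sum, mul_one]
        · rw [Finset.sum_comm, Finset.mul_sum]
          refine Finset.sum_congr rfl fun k _ => ?_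
          rw [← Finset.mul_sum, ovl_col_sum, mul_one]
    _ = 1 := by rw [hsumW, hsumX, mul_one, mul_one, hab]

/-! ### The key mirror-descent inequality -/

open Set in
lemma key_step {n : ℕ} (hn : 0 < n) {α : ℝ} (hα2 : 1/2 < α) (hα1 : α < 1)
    (W : Fin n → Matrix (Fin d) (Fin d) ℂ)
    (hW : ∀ j, (W j).PosSemidef ∧ (W j).trace = 1)
    (pt : Fin n → ℝ) (hpt : ∀ j, 0 < pt j) (hpt1 : ∑ j, pt j = 1)
    {Qt : Matrix (Fin d) (Fin d) ℂ} (hQt : Qt.PosDef) (hQttr : Qt.trace = 1)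
    (hopt : ∀ Q' : Matrix (Fin d) (Fin d) ℂ, Q'.PosDef → Q'.trace = 1 →
      ∑ j, pt j * petzRenyiDiv α (W j) Qt ≤ ∑ j, pt j * petzRenyiDiv α (W j) Q')
    {Qf : Matrix (Fin d) (Fin d) ℂ} (hQf : Qf.PosDef) (hQftr : Qf.trace = 1) :
    Real.log (∑ k, pt k * Real.exp (petzRenyiDiv α (W k) Qt))
      ≤ ∑ j, (pt j * Real.exp (petzRenyiDiv α (W j) Qt)
          / ∑ k, pt k * Real.exp (petzRenyiDiv α (W k) Qt)) * petzRenyiDiv α (W j) Qf := by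
  have hne : Nonempty (Fin n) := ⟨⟨0, hn⟩⟩
  have hα0 : (0:ℝ) < α := by linarith
  have hβ0 : (0:ℝ) < 1 - α := by linarith
  have hβ1 : 1 - α < 1 := by linarith
  set γ := 1/(1-α) with hγdef
  have hγ0 : 0 < γ := by rw [hγdef]; positivity
  have hcpos : ∀ j, 0 < trRe (W j) α (matRpow Qt (1-α)) :=
    fun j => b_pos (hW j).1 (hW j).2 hQt α (1-α)
  have hbpos : ∀ j, 0 < trRe (W j) α (matRpow Qf (1-α)) :=
    fun j => b_pos (hW j).1 (hW j).2 hQf α (1-α)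
  have hpetz : ∀ j (Q' : Matrix (Fin d) (Fin d) ℂ), petzRenyiDiv α (W j) Q'
      = (1/(α-1)) * Real.log (trRe (W j) α (matRpow Q' (1-α))) := fun j Q' => rfl
  set a := fun j => (trRe (W j) α (matRpow Qf (1-α)) / trRe (W j) α (matRpow Qt (1-α)))^γ - 1
    with hadef
  have hratio : ∀ j, 0 < (trRe (W j) α (matRpow Qf (1-α))
      / trRe (W j) α (matRpow Qt (1-α)))^γ :=
    fun j => Real.rpow_pos_of_pos (div_pos (hbpos j) (hcpos j)) γ
  have haj : ∀ j, -1 < a j := by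
    intro j
    have := hratio j
    rw [hadef]
    simp only
    linarith
  have hslope : ∀ s : ℝ, s ∈ Set.Ioc (0:ℝ) 1 → ∑ j, pt j * Real.log (1 + s * a j) ≤ 0 := by
    rintro s ⟨hs0, hs1⟩
    set Qs := ((1-s:ℝ):ℂ) • Qt + ((s:ℝ):ℂ) • Qf with hQsdef
    have hQspd : Qs.PosDef := posDef_combo hQt hQf hs0.le hs1
    have hQstr : Qs.trace = 1 := by
      rw [hQsdef, Matrix.trace_add, Matrix.trace_smul, Matrix.trace_smul, hQttr, hQftr,
        smul_eq_mul, smul_eq_mul, mul_one, mul_one]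
      push_cast
      ring
    have hQsb : ∀ j, 0 < trRe (W j) α (matRpow Qs (1-α)) :=
      fun j => b_pos (hW j).1 (hW j).2 hQspd α (1-α)
    have hchord : ∀ j, 1 + s * a j
        ≤ (trRe (W j) α (matRpow Qs (1-α)) / trRe (W j) α (matRpow Qt (1-α)))^γ := by
      intro j
      have hseg := pow_concave_seg (hW j).1 α hQt hQf hs0.le hs1 hβ0 hβ1 (hcpos j) (hbpos j)
      rw [← hQsdef] at hseg
      have hcγ : 0 < (trRe (W j) α (matRpow Qt (1-α)))^γ :=
        Real.rpow_pos_of_pos (hcpos j) γ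
      rw [Real.div_rpow (hQsb j).le (hcpos j).le]
      rw [hadef]
      simp only
      rw [Real.div_rpow (hbpos j).le (hcpos j).le]
      rw [le_div_iff₀ hcγ]
      have e : (1 + s * ((trRe (W j) α (matRpow Qf (1-α)))^γ
            / (trRe (W j) α (matRpow Qt (1-α)))^γ - 1))
            * (trRe (W j) α (matRpow Qt (1-α)))^γ
          = (1-s) * (trRe (W j) α (matRpow Qt (1-α)))^γ
            + s * ((trRe (W j) α (matRpow Qf (1-α)))^γ
              / (trRe (W j) α (matRpow Qt (1-α)))^γ
              * (trRe (W j) α (matRpow Qt (1-α)))^γ) := by ring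
      rw [e, div_mul_cancel₀ _ hcγ.ne']
      rw [hγdef]
      exact hseg
    have hlogmono : ∀ j, pt j * Real.log (1 + s * a j)
        ≤ pt j * (γ * (Real.log (trRe (W j) α (matRpow Qs (1-α)))
          - Real.log (trRe (W j) α (matRpow Qt (1-α))))) := by
      intro j
      have hpos1 : 0 < 1 + s * a j := by nlinarith [haj j]
      have h1 := Real.log_le_log hpos1 (hchord j)
      rw [Real.log_rpow (div_pos (hQsb j) (hcpos j)),
        Real.log_div (hQsb j).ne' (hcpos j).ne'] at h1
      exact mul_le_mul_of_nonneg_left h1 (hpt j).le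
    have hoptQs := hopt Qs hQspd hQstr
    have hS : ∑ j, pt j * Real.log (trRe (W j) α (matRpow Qs (1-α)))
        ≤ ∑ j, pt j * Real.log (trRe (W j) α (matRpow Qt (1-α))) := by
      have e1 : ∑ j, pt j * petzRenyiDiv α (W j) Qt
          = (1/(α-1)) * ∑ j, pt j * Real.log (trRe (W j) α (matRpow Qt (1-α))) := by
        rw [Finset.mul_sum]
        refine Finset.sum_congr rfl fun j _ => ?_
        rw [hpetz]
        ring
      have e2 : ∑ j, pt j * petzRenyiDiv α (W j) Qs
          = (1/(α-1)) * ∑ j, pt j * Real.log (trRe (W j) α (matRpow Qs (1-α))) := by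
        rw [Finset.mul_sum]
        refine Finset.sum_congr rfl fun j _ => ?_
        rw [hpetz]
        ring
      rw [e1, e2] at hoptQs
      have hneg : (1/(α-1) : ℝ) < 0 := by
        apply div_neg_of_pos_of_neg one_pos
        linarith
      nlinarith [hoptQs]
    calc ∑ j, pt j * Real.log (1 + s * a j)
        ≤ ∑ j, pt j * (γ * (Real.log (trRe (W j) α (matRpow Qs (1-α)))
          - Real.log (trRe (W j) α (matRpow Qt (1-α))))) :=
          Finset.sum_le_sum fun j _ => hlogmono j
      _ = γ * ∑ j, (pt j * Real.log (trRe (W j) α (matRpow Qs (1-α)))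
          - pt j * Real.log (trRe (W j) α (matRpow Qt (1-α)))) := by
          rw [Finset.mul_sum]
          exact Finset.sum_congr rfl fun j _ => by ring
      _ = γ * (∑ j, pt j * Real.log (trRe (W j) α (matRpow Qs (1-α)))
          - ∑ j, pt j * Real.log (trRe (W j) α (matRpow Qt (1-α)))) := by
          rw [Finset.sum_sub_distrib]
      _ ≤ 0 := mul_nonpos_of_nonneg_of_nonpos hγ0.le (by linarith)
  have hsum_a := slope_lemma hn pt a (fun j => (hpt j).le) haj hslope
  have hK : ∑ j, pt j * ((trRe (W j) α (matRpow Qf (1-α))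
      / trRe (W j) α (matRpow Qt (1-α)))^γ) ≤ 1 := by
    have e : ∑ j, pt j * a j
        = ∑ j, pt j * ((trRe (W j) α (matRpow Qf (1-α))
          / trRe (W j) α (matRpow Qt (1-α)))^γ) - ∑ j, pt j := by
      rw [← Finset.sum_sub_distrib]
      refine Finset.sum_congr rfl fun j _ => ?_
      rw [hadef]
      simp only
      ring
    rw [e, hpt1] at hsum_a
    linarith
  have hne1 : α - 1 ≠ 0 := by intro h; linarith
  have hexp : ∀ j, (trRe (W j) α (matRpow Qf (1-α)) / trRe (W j) α (matRpow Qt (1-α)))^γ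
      = Real.exp (petzRenyiDiv α (W j) Qt - petzRenyiDiv α (W j) Qf) := by
    intro j
    rw [hpetz, hpetz, Real.rpow_def_of_pos (div_pos (hbpos j) (hcpos j))]
    congr 1
    rw [Real.log_div (hbpos j).ne' (hcpos j).ne', hγdef]
    field_simp
    ring
  set Z := ∑ k, pt k * Real.exp (petzRenyiDiv α (W k) Qt) with hZdef
  have hZ0 : 0 < Z := Finset.sum_pos (fun k _ => mul_pos (hpt k) (Real.exp_pos _))
    Finset.univ_nonempty
  have hr1 : ∑ j, pt j * Real.exp (petzRenyiDiv α (W j) Qt) / Z = 1 := by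
    rw [← Finset.sum_div, ← hZdef, div_self hZ0.ne']
  have hgibbs := gibbs_ineq hn (fun j => pt j * Real.exp (petzRenyiDiv α (W j) Qt) / Z)
    (fun j => pt j * Real.exp (petzRenyiDiv α (W j) Qt - petzRenyiDiv α (W j) Qf))
    (fun j => div_pos (mul_pos (hpt j) (Real.exp_pos _)) hZ0)
    hr1
    (fun j => mul_pos (hpt j) (Real.exp_pos _))
  have hysum : ∑ j, pt j * Real.exp (petzRenyiDiv α (W j) Qt - petzRenyiDiv α (W j) Qf)
      ≤ 1 := by
    calc ∑ j, pt j * Real.exp (petzRenyiDiv α (W j) Qt - petzRenyiDiv α (W j) Qf)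
        = ∑ j, pt j * ((trRe (W j) α (matRpow Qf (1-α))
          / trRe (W j) α (matRpow Qt (1-α)))^γ) :=
          Finset.sum_congr rfl fun j _ => by rw [hexp j]
      _ ≤ 1 := hK
  have hylog : Real.log (∑ j, pt j * Real.exp (petzRenyiDiv α (W j) Qt
      - petzRenyiDiv α (W j) Qf)) ≤ 0 :=
    Real.log_nonpos (Finset.sum_nonneg fun j _ =>
      (mul_pos (hpt j) (Real.exp_pos _)).le) hysum
  have hterm : ∀ j, Real.log ((pt j * Real.exp (petzRenyiDiv α (W j) Qt
        - petzRenyiDiv α (W j) Qf)) / (pt j * Real.exp (petzRenyiDiv α (W j) Qt) / Z))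
      = Real.log Z - petzRenyiDiv α (W j) Qf := by
    intro j
    have e : (pt j * Real.exp (petzRenyiDiv α (W j) Qt - petzRenyiDiv α (W j) Qf))
        / (pt j * Real.exp (petzRenyiDiv α (W j) Qt) / Z)
        = Z * Real.exp (- petzRenyiDiv α (W j) Qf) := by
      rw [Real.exp_sub, Real.exp_neg]
      field_simp
      exact div_self (hpt j).ne'
    rw [e, Real.log_mul hZ0.ne' (Real.exp_pos _).ne', Real.log_exp]
    ring
  have hfinal := hgibbs.trans hylog
  have hLHS : ∑ j, (pt j * Real.exp (petzRenyiDiv α (W j) Qt) / Z)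
        * Real.log ((pt j * Real.exp (petzRenyiDiv α (W j) Qt - petzRenyiDiv α (W j) Qf))
          / (pt j * Real.exp (petzRenyiDiv α (W j) Qt) / Z))
      = Real.log Z - ∑ j, (pt j * Real.exp (petzRenyiDiv α (W j) Qt) / Z)
        * petzRenyiDiv α (W j) Qf := by
    calc ∑ j, (pt j * Real.exp (petzRenyiDiv α (W j) Qt) / Z)
          * Real.log ((pt j * Real.exp (petzRenyiDiv α (W j) Qt - petzRenyiDiv α (W j) Qf))
            / (pt j * Real.exp (petzRenyiDiv α (W j) Qt) / Z))
        = ∑ j, ((pt j * Real.exp (petzRenyiDiv α (W j) Qt) / Z) * Real.log Z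
          - (pt j * Real.exp (petzRenyiDiv α (W j) Qt) / Z) * petzRenyiDiv α (W j) Qf) := by
          refine Finset.sum_congr rfl fun j _ => ?_
          rw [hterm j]
          ring
      _ = (∑ j, pt j * Real.exp (petzRenyiDiv α (W j) Qt) / Z) * Real.log Z
          - ∑ j, (pt j * Real.exp (petzRenyiDiv α (W j) Qt) / Z)
            * petzRenyiDiv α (W j) Qf := by
          rw [Finset.sum_sub_distrib, ← Finset.sum_mul]
      _ = Real.log Z - ∑ j, (pt j * Real.exp (petzRenyiDiv α (W j) Qt) / Z)
          * petzRenyiDiv α (W j) Qf := by rw [hr1, one_mul]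
  rw [hLHS] at hfinal
  have hgoal : ∀ j, pt j * Real.exp (petzRenyiDiv α (W j) Qt) / Z
      = pt j * Real.exp (petzRenyiDiv α (W j) Qt)
        / ∑ k, pt k * Real.exp (petzRenyiDiv α (W k) Qt) := fun j => rfl
  linarith

end EMD

/-- convergence guarantee of entropic mirror descent for maximizing the
Petz–Augustin information: `I_α^A(p) - I_α^A(p_{T+1}) ≤ log(n)/T`. -/
theorem emd_augustin_convergence {n d : ℕ} (hn : 0 < n) (hd : 0 < d) (α : ℝ)
    (hα : α ∈ Set.Ioo (1 / 2 : ℝ) 1)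
    (W : Fin n → Matrix (Fin d) (Fin d) ℂ)
    (hW : ∀ j, (W j).PosSemidef ∧ (W j).trace = 1)
    (T : ℕ) (hT : 1 ≤ T)
    (p : ℕ → Fin n → ℝ) (Q : ℕ → Matrix (Fin d) (Fin d) ℂ)
    (hp1 : ∀ j, p 1 j = 1 / n)
    (hQ : ∀ t, 1 ≤ t → t ≤ T →
      (Q t).PosDef ∧ (Q t).trace = 1 ∧
        ∑ j, p t j * petzRenyiDiv α (W j) (Q t) = augustinInfo α W (p t))
    (hupd : ∀ t, 1 ≤ t → t ≤ T → ∀ j,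
      p (t + 1) j = p t j * Real.exp (petzRenyiDiv α (W j) (Q t))
        / ∑ k, p t k * Real.exp (petzRenyiDiv α (W k) (Q t)))
    (q : Fin n → ℝ) (hq : q ∈ stdSimplex ℝ (Fin n)) :
    augustinInfo α W q - augustinInfo α W (p (T + 1)) ≤ Real.log n / T := by
  classical
  obtain ⟨hα2, hα1⟩ := hα
  have hne : Nonempty (Fin n) := ⟨⟨0, hn⟩⟩
  have hNE : Nonempty {Qm : Matrix (Fin d) (Fin d) ℂ // Qm.PosDef ∧ Qm.trace = 1} := by
    refine ⟨⟨(((d:ℝ)⁻¹ : ℝ):ℂ) • 1, EMD.posDef_ofReal_smul (by positivity) Matrix.PosDef.one, ?_⟩⟩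
    rw [Matrix.trace_smul, Matrix.trace_one]
    rw [smul_eq_mul]
    have hd' : ((d:ℝ) : ℂ) ≠ 0 := by
      simp only [ne_eq, Complex.ofReal_eq_zero, Nat.cast_eq_zero]
      omega
    push_cast
    field_simp
    simp
  have hDpos : ∀ (j : Fin n) (Qm : Matrix (Fin d) (Fin d) ℂ), Qm.PosDef → Qm.trace = 1 →
      0 ≤ petzRenyiDiv α (W j) Qm := by
    intro j Qm hQm hQmtr
    have hb0 := EMD.b_pos (hW j).1 (hW j).2 hQm α (1-α)
    have hb1 := EMD.b_le_one (hW j).1 (hW j).2 hQm hQmtr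
      (le_of_lt (by linarith : (0:ℝ) < α)) (by linarith : (0:ℝ) ≤ 1-α) (by ring)
    have hlog : Real.log (EMD.trRe (W j) α (matRpow Qm (1-α))) ≤ 0 :=
      Real.log_nonpos hb0.le hb1
    show 0 ≤ (1 / (α - 1)) * Real.log (EMD.trRe (W j) α (matRpow Qm (1-α)))
    have h1 : (1 / (α - 1) : ℝ) ≤ 0 :=
      div_nonpos_of_nonneg_of_nonpos (by norm_num) (by linarith)
    nlinarith [hlog, h1]
  have hBdd : ∀ (pp : Fin n → ℝ), (∀ j, 0 ≤ pp j) → BddBelow (Set.range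
      fun (Qm : {Qm : Matrix (Fin d) (Fin d) ℂ // Qm.PosDef ∧ Qm.trace = 1}) =>
        ∑ j, pp j * petzRenyiDiv α (W j) (Qm : Matrix (Fin d) (Fin d) ℂ)) := by
    intro pp hpp
    refine ⟨0, ?_⟩
    rintro x ⟨Qm, rfl⟩
    exact Finset.sum_nonneg fun j _ => mul_nonneg (hpp j) (hDpos j Qm.1 Qm.2.1 Qm.2.2)
  have hInfLe : ∀ (pp : Fin n → ℝ), (∀ j, 0 ≤ pp j) →
      ∀ (Qm : Matrix (Fin d) (Fin d) ℂ), Qm.PosDef → Qm.trace = 1 →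
      augustinInfo α W pp ≤ ∑ j, pp j * petzRenyiDiv α (W j) Qm := by
    intro pp hpp Qm h1 h2
    exact ciInf_le (hBdd pp hpp) ⟨Qm, h1, h2⟩
  have hInfGe : ∀ (pp : Fin n → ℝ) (c : ℝ),
      (∀ (Qm : Matrix (Fin d) (Fin d) ℂ), Qm.PosDef → Qm.trace = 1 →
        c ≤ ∑ j, pp j * petzRenyiDiv α (W j) Qm) → c ≤ augustinInfo α W pp :=
    fun pp c h => le_ciInf (fun Qm => h Qm.1 Qm.2.1 Qm.2.2)
  have hsim : ∀ t, 1 ≤ t → t ≤ T + 1 → (∀ j, 0 < p t j) ∧ ∑ j, p t j = 1 := by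
    intro t
    induction t with
    | zero => omega
    | succ t ih =>
      intro ht1 htT
      rcases Nat.eq_zero_or_pos t with h0 | h0
      · subst h0
        constructor
        · intro j
          rw [hp1 j]
          have : (0:ℝ) < n := by exact_mod_cast hn
          positivity
        · rw [Finset.sum_congr rfl (fun j _ => hp1 j), Finset.sum_const, Finset.card_univ,
            Fintype.card_fin, nsmul_eq_mul]
          have : (n:ℝ) ≠ 0 := by exact_mod_cast hn.ne'
          field_simp
      · have ht1' : 1 ≤ t := h0
        have htT' : t ≤ T := by omega
        obtain ⟨hpos, hsum⟩ := ih ht1' (by omega)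
        have hZ : 0 < ∑ k, p t k * Real.exp (petzRenyiDiv α (W k) (Q t)) :=
          Finset.sum_pos (fun k _ => mul_pos (hpos k) (Real.exp_pos _)) Finset.univ_nonempty
        constructor
        · intro j
          rw [hupd t ht1' htT' j]
          exact div_pos (mul_pos (hpos j) (Real.exp_pos _)) hZ
        · rw [Finset.sum_congr rfl (fun j _ => hupd t ht1' htT' j), ← Finset.sum_div,
            div_self hZ.ne']
  have hq0 : ∀ j, 0 ≤ q j := fun j => hq.1 j
  have hq1 : ∑ j, q j = 1 := hq.2
  set KL := fun t => ∑ j, q j * (Real.log (q j) - Real.log (p t j)) with hKLdef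
  have step : ∀ t, 1 ≤ t → t ≤ T →
      (augustinInfo α W (p t) ≤ augustinInfo α W (p (t+1))) ∧
      (augustinInfo α W q - augustinInfo α W (p (t+1)) ≤ KL t - KL (t+1)) := by
    intro t ht1 htT
    obtain ⟨hQpd, hQtr, hQopt⟩ := hQ t ht1 htT
    obtain ⟨hpos, hsum⟩ := hsim t ht1 (by omega)
    set Z := ∑ k, p t k * Real.exp (petzRenyiDiv α (W k) (Q t)) with hZdef
    have hZ : 0 < Z := Finset.sum_pos (fun k _ => mul_pos (hpos k) (Real.exp_pos _))
      Finset.univ_nonempty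
    have hopt : ∀ Q' : Matrix (Fin d) (Fin d) ℂ, Q'.PosDef → Q'.trace = 1 →
        ∑ j, p t j * petzRenyiDiv α (W j) (Q t) ≤ ∑ j, p t j * petzRenyiDiv α (W j) Q' := by
      intro Q' h1 h2
      rw [hQopt]
      exact hInfLe (p t) (fun j => (hpos j).le) Q' h1 h2
    have hlogZ : Real.log Z ≤ augustinInfo α W (p (t+1)) := by
      apply hInfGe
      intro Qm h1 h2
      have hks := EMD.key_step hn hα2 hα1 W hW (p t) hpos hsum hQpd hQtr hopt h1 h2
      calc Real.log Z
          ≤ ∑ j, (p t j * Real.exp (petzRenyiDiv α (W j) (Q t)) / Z)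
            * petzRenyiDiv α (W j) Qm := hks
        _ = ∑ j, p (t+1) j * petzRenyiDiv α (W j) Qm := by
            refine Finset.sum_congr rfl fun j _ => ?_
            rw [hupd t ht1 htT j]
    have hIt : augustinInfo α W (p t) ≤ Real.log Z := by
      have hg := EMD.gibbs_ineq hn (p t)
        (fun j => p t j * Real.exp (petzRenyiDiv α (W j) (Q t))) hpos hsum
        (fun j => mul_pos (hpos j) (Real.exp_pos _))
      have he : ∀ j, Real.log (p t j * Real.exp (petzRenyiDiv α (W j) (Q t)) / p t j)
          = petzRenyiDiv α (W j) (Q t) := by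
        intro j
        rw [mul_comm, mul_div_assoc, div_self (hpos j).ne', mul_one, Real.log_exp]
      calc augustinInfo α W (p t) = ∑ j, p t j * petzRenyiDiv α (W j) (Q t) := hQopt.symm
        _ = ∑ j, p t j * Real.log (p t j * Real.exp (petzRenyiDiv α (W j) (Q t)) / p t j) :=
            Finset.sum_congr rfl fun j _ => by rw [he j]
        _ ≤ Real.log Z := hg
    have hq_obj : augustinInfo α W q ≤ ∑ j, q j * petzRenyiDiv α (W j) (Q t) :=
      hInfLe q hq0 _ hQpd hQtr
    have hident : ∑ j, q j * petzRenyiDiv α (W j) (Q t) = KL t - KL (t+1) + Real.log Z := by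
      have hlogp : ∀ j, Real.log (p (t+1) j)
          = Real.log (p t j) + petzRenyiDiv α (W j) (Q t) - Real.log Z := by
        intro j
        rw [hupd t ht1 htT j, ← hZdef,
          Real.log_div (mul_pos (hpos j) (Real.exp_pos _)).ne' hZ.ne',
          Real.log_mul (hpos j).ne' (Real.exp_pos _).ne', Real.log_exp]
      have e1 : KL t - KL (t+1) = ∑ j, q j * (Real.log (p (t+1) j) - Real.log (p t j)) := by
        rw [hKLdef]
        simp only
        rw [← Finset.sum_sub_distrib]
        refine Finset.sum_congr rfl fun j _ => ?_
        ring
      have e2 : ∑ j, q j * (Real.log (p (t+1) j) - Real.log (p t j))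
          = ∑ j, (q j * petzRenyiDiv α (W j) (Q t) - q j * Real.log Z) := by
        refine Finset.sum_congr rfl fun j _ => ?_
        rw [hlogp j]
        ring
      rw [e1, e2, Finset.sum_sub_distrib, ← Finset.sum_mul, hq1, one_mul]
      ring
    refine ⟨le_trans hIt hlogZ, ?_⟩
    have h3 : augustinInfo α W q ≤ KL t - KL (t+1) + Real.log Z := by
      rw [← hident]; exact hq_obj
    linarith
  have chain : ∀ k v, v + k = T + 1 → 1 ≤ v →
      augustinInfo α W (p v) ≤ augustinInfo α W (p (T+1)) := by
    intro k
    induction k with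
    | zero =>
      intro v hv _
      have : v = T + 1 := by omega
      rw [this]
    | succ k ih =>
      intro v hv h1
      have hvT : v ≤ T := by omega
      exact le_trans (step v h1 hvT).1 (ih (v+1) (by omega) (by omega))
  have htel : ∀ i ∈ Finset.range T,
      augustinInfo α W q - augustinInfo α W (p (T+1)) ≤ KL (i+1) - KL (i+1+1) := by
    intro i hi
    have h2 : i+1 ≤ T := Finset.mem_range.mp hi
    have hstep := (step (i+1) (by omega) h2).2
    have hchain : augustinInfo α W (p (i+1+1)) ≤ augustinInfo α W (p (T+1)) :=
      chain (T - (i+1)) (i+1+1) (by omega) (by omega)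
    linarith
  have hsumtel := Finset.sum_le_sum htel
  rw [Finset.sum_const, Finset.card_range] at hsumtel
  have htele : ∑ i ∈ Finset.range T, (KL (i+1) - KL (i+1+1)) = KL 1 - KL (T+1) := by
    exact Finset.sum_range_sub' (fun i => KL (i+1)) T
  rw [htele] at hsumtel
  obtain ⟨hposT, hsumT⟩ := hsim (T+1) (by omega) (le_refl _)
  have hKLT : 0 ≤ KL (T+1) := by
    have key : ∀ j, q j * (Real.log (p (T+1) j) - Real.log (q j)) ≤ p (T+1) j - q j := by
      intro j
      rcases eq_or_lt_of_le (hq0 j) with h | h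
      · rw [← h]
        simp only [zero_mul, sub_zero]
        exact (hposT j).le
      · have hlog := Real.log_le_sub_one_of_pos (div_pos (hposT j) h)
        rw [Real.log_div (hposT j).ne' h.ne'] at hlog
        calc q j * (Real.log (p (T+1) j) - Real.log (q j))
            ≤ q j * (p (T+1) j / q j - 1) := mul_le_mul_of_nonneg_left hlog (hq0 j)
          _ = p (T+1) j - q j := by field_simp
    have hs := Finset.sum_le_sum (fun j (_ : j ∈ Finset.univ) => key j)
    rw [Finset.sum_sub_distrib, hsumT, hq1, sub_self] at hs
    have e : KL (T+1) = -∑ j, q j * (Real.log (p (T+1) j) - Real.log (q j)) := by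
      rw [hKLdef]
      simp only
      rw [← Finset.sum_neg_distrib]
      refine Finset.sum_congr rfl fun j _ => ?_
      ring
    rw [e]
    linarith
  have hKL1 : KL 1 ≤ Real.log n := by
    rw [hKLdef]
    simp only
    have he : ∀ j, q j * (Real.log (q j) - Real.log (p 1 j))
        = q j * Real.log (q j) + q j * Real.log n := by
      intro j
      rw [hp1 j, one_div, Real.log_inv]
      ring
    rw [Finset.sum_congr rfl (fun j _ => he j), Finset.sum_add_distrib, ← Finset.sum_mul,
      hq1, one_mul]
    have hneg : ∑ j, q j * Real.log (q j) ≤ 0 := by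
      apply Finset.sum_nonpos
      intro j _
      rcases eq_or_lt_of_le (hq0 j) with h | h
      · rw [← h, zero_mul]
      · have hle1 : q j ≤ 1 := by
          rw [← hq1]
          exact Finset.single_le_sum (fun i _ => hq0 i) (Finset.mem_univ j)
        exact mul_nonpos_of_nonneg_of_nonpos (hq0 j) (Real.log_nonpos (hq0 j) hle1)
    linarith
  have hT0 : (0:ℝ) < T := by exact_mod_cast hT
  rw [nsmul_eq_mul] at hsumtel
  have hfin : (T:ℝ) * (augustinInfo α W q - augustinInfo α W (p (T+1))) ≤ Real.log n := by
    calc (T:ℝ) * (augustinInfo α W q - augustinInfo α W (p (T+1))) ≤ KL 1 - KL (T+1) := hsumtel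
      _ ≤ Real.log n := by linarith
  rw [le_div_iff₀ hT0]
  linarith [hfin, mul_comm (T:ℝ) (augustinInfo α W q - augustinInfo α W (p (T+1)))]
end

section
/- Let C ⊆ ℝ^n be a convex set contained in an open convex set U ⊆ ℝ^n, let f, h : U → ℝ be differentiable with f and h convex on U, and suppose there is L > 0 such that L·h − f is convex on U. Define the Bregman divergence B_h(y, x) := h(y) − h(x) − ⟨∇h(x), y − x⟩. Let (x_t)_{t≥1} ⊆ C satisfy: for each t ≥ 1, x_{t+1} minimizes the function x ↦ ⟨∇f(x_t), x⟩ + L·B_h(x, x_t) over C. Then for every T ≥ 1 and every x ∈ C, f(x_{T+1}) − f(x) ≤ L·B_h(x, x_1)/T. -/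
open scoped RealInnerProductSpace

section helpers
variable {n : ℕ}
local notation "E" => EuclideanSpace ℝ (Fin n)

lemma lineDeriv13 (g : E → ℝ) (p a v : E) (hg : HasGradientAt g p a) :
    HasDerivAt (fun s : ℝ => g (a + s • v)) ⟪p, v⟫ 0 := by
  have hline : HasDerivAt (fun s : ℝ => a + s • v) v 0 := by
    simpa using ((hasDerivAt_id (0:ℝ)).smul_const v).const_add a
  have ha0 : a + (0:ℝ) • v = a := by simp
  have hF : HasFDerivAt g ((InnerProductSpace.toDual ℝ E) p) (a + (0:ℝ) • v) := by
    rw [ha0]; exact hg.hasFDerivAt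
  have := hF.comp_hasDerivAt (0:ℝ) hline
  simpa [InnerProductSpace.toDual_apply_apply, Function.comp_def] using this

lemma deriv_le_of_slope (ψ : ℝ → ℝ) (d c : ℝ) (hd : HasDerivAt ψ d 0)
    (hs : ∀ s : ℝ, 0 < s → s ≤ 1 → ψ s ≤ ψ 0 + s * c) : d ≤ c := by
  have h1 : Filter.Tendsto (slope ψ 0) (nhdsWithin 0 (Set.Ioi 0)) (nhds d) :=
    (hasDerivAt_iff_tendsto_slope.1 hd).mono_left
      (nhdsWithin_mono _ (fun x hx => ne_of_gt hx))
  refine le_of_tendsto h1 ?_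
  filter_upwards [Ioc_mem_nhdsGT_of_mem (by simp : (0:ℝ) ∈ Set.Ico 0 1),
    self_mem_nhdsWithin] with s hs1 hs2
  have hpos : 0 < s := hs2
  rw [slope_def_field, sub_zero, div_le_iff₀ hpos]
  have := hs s hpos hs1.2
  nlinarith [hs s hpos hs1.2]

lemma deriv_nonneg_of_min (ψ : ℝ → ℝ) (d : ℝ) (hd : HasDerivAt ψ d 0)
    (hs : ∀ s : ℝ, 0 < s → s ≤ 1 → ψ 0 ≤ ψ s) : 0 ≤ d := by
  have := deriv_le_of_slope (fun s => -ψ s) (-d) 0 hd.neg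
    (fun s h1 h2 => by simpa using hs s h1 h2)
  linarith

/-- gradient inequality for convex functions -/
lemma grad_ineq {U : Set E} (hUconv : Convex ℝ U) (g : E → ℝ) (p : E) (a b : E)
    (hgconv : ConvexOn ℝ U g) (hg : HasGradientAt g p a) (ha : a ∈ U) (hb : b ∈ U) :
    g a + ⟪p, b - a⟫ ≤ g b := by
  have key : ⟪p, b - a⟫ ≤ g b - g a := by
    refine deriv_le_of_slope _ _ _ (lineDeriv13 g p a (b - a) hg) ?_
    intro s h0 h1
    have hmem : a + s • (b - a) ∈ U := by
      have := hUconv ha hb (by linarith : (0:ℝ) ≤ 1 - s) h0.le (by ring)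
      convert this using 1
      module
    have := hgconv.2 ha hb (by linarith : (0:ℝ) ≤ 1 - s) h0.le (by ring)
    have heq : (1 - s) • a + s • b = a + s • (b - a) := by module
    rw [heq] at this
    simp only [smul_eq_mul] at this
    have h00 : a + (0:ℝ) • (b - a) = a := by simp
    rw [h00]
    nlinarith
  linarith
end helpers

/-- convergence guarantee of mirror descent under relative smoothness
(Lu–Freund–Nesterov): if `f` is `L`-smooth relative to `h` on an open convex set `U`
containing the convex set `C`, and each iterate `x_{t+1}` minimizes
`x ↦ ⟨∇f(x_t), x⟩ + L·B_h(x, x_t)` over `C`, then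
`f(x_{T+1}) - f(x) ≤ L·B_h(x, x_1)/T` for every `x ∈ C`. -/
theorem mirror_descent_relative_smooth_convergence {n : ℕ}
    (U C : Set (EuclideanSpace ℝ (Fin n)))
    (hUopen : IsOpen U) (hUconv : Convex ℝ U) (hCU : C ⊆ U) (hCconv : Convex ℝ C)
    (f h : EuclideanSpace ℝ (Fin n) → ℝ)
    (f' h' : EuclideanSpace ℝ (Fin n) → EuclideanSpace ℝ (Fin n))
    (hfdiff : ∀ x ∈ U, HasGradientAt f (f' x) x)
    (hhdiff : ∀ x ∈ U, HasGradientAt h (h' x) x)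
    (hfconv : ConvexOn ℝ U f) (hhconv : ConvexOn ℝ U h)
    (L : ℝ) (hL : 0 < L)
    (hrel : ConvexOn ℝ U (fun x => L * h x - f x))
    (B : EuclideanSpace ℝ (Fin n) → EuclideanSpace ℝ (Fin n) → ℝ)
    (hB : ∀ y x, B y x = h y - h x - ⟪h' x, y - x⟫)
    (x : ℕ → EuclideanSpace ℝ (Fin n))
    (hxC : ∀ t, 1 ≤ t → x t ∈ C)
    (hmin : ∀ t, 1 ≤ t → ∀ y ∈ C,
      ⟪f' (x t), x (t + 1)⟫ + L * B (x (t + 1)) (x t)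
        ≤ ⟪f' (x t), y⟫ + L * B y (x t))
    (T : ℕ) (hT : 1 ≤ T) (y : EuclideanSpace ℝ (Fin n)) (hy : y ∈ C) :
    f (x (T + 1)) - f y ≤ L * B y (x 1) / T := by
  have hxU : ∀ t, 1 ≤ t → x t ∈ U := fun t ht => hCU (hxC t ht)
  have hyU : y ∈ U := hCU hy
  -- gradient of L*h - f
  have hgrad : ∀ a ∈ U, HasGradientAt (fun z => L * h z - f z) (L • h' a - f' a) a := by
    intro a ha
    rw [hasGradientAt_iff_hasFDerivAt]
    have hdual : (InnerProductSpace.toDual ℝ (EuclideanSpace ℝ (Fin n))) (L • h' a - f' a)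
        = L • (InnerProductSpace.toDual ℝ (EuclideanSpace ℝ (Fin n))) (h' a)
          - (InnerProductSpace.toDual ℝ (EuclideanSpace ℝ (Fin n))) (f' a) := by
      simp [map_sub, map_smul]
    rw [hdual]
    have := (((hhdiff a ha).hasFDerivAt.const_smul L).sub (hfdiff a ha).hasFDerivAt)
    exact this
  -- relative smoothness upper bound
  have relsmooth : ∀ a ∈ U, ∀ b ∈ U,
      f b ≤ f a + ⟪f' a, b - a⟫ + L * (h b - h a - ⟪h' a, b - a⟫) := by
    intro a ha b hb
    have := grad_ineq hUconv (fun z => L * h z - f z) (L • h' a - f' a) a b hrel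
      (hgrad a ha) ha hb
    rw [inner_sub_left, real_inner_smul_left] at this
    linarith
  -- nonnegativity of B
  have Bnonneg : ∀ a ∈ U, ∀ b ∈ U, 0 ≤ B b a := by
    intro a ha b hb
    have := grad_ineq hUconv h (h' a) a b hhconv (hhdiff a ha) ha hb
    rw [hB]; linarith
  -- variational inequality
  have VI : ∀ t, 1 ≤ t → ∀ w ∈ C,
      0 ≤ ⟪f' (x t), w - x (t+1)⟫ + L * (⟪h' (x (t+1)), w - x (t+1)⟫
        - ⟪h' (x t), w - x (t+1)⟫) := by
    intro t ht w hw
    set a := x t with ha_def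
    set z := x (t+1) with hz_def
    set v := w - z with hv_def
    set c := f' a
    set p := h' a
    set q := h' z
    have hzU : z ∈ U := hxU (t+1) (le_trans ht (Nat.le_succ t))
    have H1 : HasDerivAt (fun s : ℝ => h (z + s • v)) ⟪q, v⟫ 0 :=
      lineDeriv13 h q z v (hhdiff z hzU)
    have hψ : HasDerivAt (fun s : ℝ => ⟪c, z + s • v⟫ + L * B (z + s • v) a)
        (⟪c, v⟫ + L * (⟪q, v⟫ - ⟪p, v⟫)) 0 := by
      have heq : (fun s : ℝ => ⟪c, z + s • v⟫ + L * B (z + s • v) a)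
          = fun s : ℝ => (⟪c, z⟫ + s * ⟪c, v⟫)
            + L * (h (z + s • v) - h a - (⟪p, z - a⟫ + s * ⟪p, v⟫)) := by
        funext s
        rw [hB]
        have h1 : z + s • v - a = (z - a) + s • v := by module
        rw [h1, inner_add_right, inner_add_right, real_inner_smul_right,
          real_inner_smul_right]
      rw [heq]
      have A : HasDerivAt (fun s : ℝ => ⟪c, z⟫ + s * ⟪c, v⟫) ⟪c, v⟫ 0 := by
        simpa using ((hasDerivAt_id (0:ℝ)).mul_const ⟪c, v⟫).const_add ⟪c, z⟫
      have Bd : HasDerivAt (fun s : ℝ => ⟪p, z - a⟫ + s * ⟪p, v⟫) ⟪p, v⟫ 0 := by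
        simpa using ((hasDerivAt_id (0:ℝ)).mul_const ⟪p, v⟫).const_add ⟪p, z - a⟫
      exact A.add (((H1.sub_const (h a)).sub Bd).const_mul L)
    have key := deriv_nonneg_of_min _ _ hψ ?_
    · linarith [key]
    · intro s h0 h1
      have hmem : z + s • v ∈ C := by
        have := hCconv (hxC (t+1) (le_trans ht (Nat.le_succ t))) hw
          (by linarith : (0:ℝ) ≤ 1 - s) h0.le (by ring)
        convert this using 1
        rw [hv_def]; module
      have hm := hmin t ht (z + s • v) hmem
      simpa using hm
  -- per-step inequality
  have step : ∀ t, 1 ≤ t → ∀ w ∈ C,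
      f (x (t+1)) + L * B w (x (t+1)) ≤ f w + L * B w (x t) := by
    intro t ht w hw
    have haU : x t ∈ U := hxU t ht
    have hzU : x (t+1) ∈ U := hxU (t+1) (le_trans ht (Nat.le_succ t))
    have hwU : w ∈ U := hCU hw
    have hsm := relsmooth (x t) haU (x (t+1)) hzU
    have hvi := VI t ht w hw
    have hcv := grad_ineq hUconv f (f' (x t)) (x t) w hfconv (hfdiff (x t) haU) haU hwU
    have d1 : ⟪f' (x t), w - x t⟫ = ⟪f' (x t), w - x (t+1)⟫ + ⟪f' (x t), x (t+1) - x t⟫ := by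
      rw [← inner_add_right]; congr 1; module
    have d2 : ⟪h' (x t), w - x t⟫ = ⟪h' (x t), w - x (t+1)⟫ + ⟪h' (x t), x (t+1) - x t⟫ := by
      rw [← inner_add_right]; congr 1; module
    rw [d1] at hcv
    rw [hB, hB, d2]
    linarith
  -- monotone decrease
  have dec : ∀ t, 1 ≤ t → f (x (t+1)) ≤ f (x t) := by
    intro t ht
    have hs := step t ht (x t) (hxC t ht)
    have hB0 : B (x t) (x t) = 0 := by rw [hB]; simp
    have hBn : 0 ≤ B (x t) (x (t+1)) :=
      Bnonneg (x (t+1)) (hxU (t+1) (le_trans ht (Nat.le_succ t))) (x t) (hxU t ht)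
    rw [hB0] at hs
    nlinarith
  -- telescoping
  have tel : ∀ S : ℕ, 1 ≤ S → (S : ℝ) * (f (x (S+1)) - f y)
      ≤ L * B y (x 1) - L * B y (x (S+1)) := by
    intro S hS
    induction S, hS using Nat.le_induction with
    | base =>
      have := step 1 le_rfl y hy
      push_cast
      linarith
    | succ S hS ih =>
      have hdec : f (x (S+1+1)) ≤ f (x (S+1)) := dec (S+1) (le_trans hS (Nat.le_succ S))
      have hstep := step (S+1) (le_trans hS (Nat.le_succ S)) y hy
      have hmul : (S : ℝ) * (f (x (S+1+1)) - f y) ≤ (S : ℝ) * (f (x (S+1)) - f y) :=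
        mul_le_mul_of_nonneg_left (by linarith) (Nat.cast_nonneg S)
      push_cast
      linarith
  have hTpos : (0:ℝ) < T := by exact_mod_cast hT
  rw [le_div_iff₀ hTpos]
  have htel := tel T hT
  have hBn : 0 ≤ B y (x (T+1)) :=
    Bnonneg (x (T+1)) (hxU (T+1) (le_trans hT (Nat.le_succ T))) y hyU
  nlinarith [mul_nonneg hL.le hBn]
end
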